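/- arXiv:0911.3256 — 5 statements merged into one kernel-verified Lean document; each statement's English description precedes it below -/
import Mathlib

section
/- Let X be a k-dimensional subspace of F_q^n with identifying vector v(X) = (v_n,...,v_1) and RREF generator matrix with columns (X_n,...,X_1). Fix the first j columns (v_j,...,v_1; X_j,...,X_1) of the extended representation, and let w_j = ∑_{ℓ=1}^j v_ℓ. Then the number of k-dimensional subspaces of F_q^n whose extended representation agrees with X on the first j columns equals [n-j choose k-w_j]_q. -/
/-! A subspace has exactly one RREF basis, so subspaces are counted by RREF pairs `(N, p)`.
Prescribing the columns of index `≥ n - j` of the extended representation fixes those columns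
of `N` and the pivots lying there; since pivots increase, these are the pivots of the last `w_j`
rows, and those rows vanish left of column `n - j`. Only the top left `(k - w_j) × (n - j)` block
remains free, and it can be any RREF matrix. RREF `m × r` matrices satisfy the `q`-Pascal
recursion of `[r choose m]_q`, according to whether the first column holds a pivot: if it does,
deleting the first row and column leaves an RREF matrix and a first row that is free away from
the remaining `m - 1` pivots; if not, the first column is zero and can be deleted. -/

open Finset

/-- The Gaussian binomial coefficient `[n choose k]_q`. -/
noncomputable def gaussQ (q n k : ℕ) : ℚ :=
  ∏ i ∈ Finset.range k, (((q : ℚ) ^ (n - i) - 1) / ((q : ℚ) ^ (k - i) - 1))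

/-- `M` is in reduced row echelon form with pivot columns `piv`. -/
def IsRREF {Fq : Type} [Field Fq] {k n : ℕ}
    (M : Matrix (Fin k) (Fin n) Fq) (piv : Fin k → Fin n) : Prop :=
  StrictMono piv ∧ (∀ i, M i (piv i) = 1) ∧
    (∀ i (j : Fin n), (j : ℕ) < (piv i : ℕ) → M i j = 0) ∧
    (∀ i i', i' ≠ i → M i' (piv i) = 0)

theorem gaussQ_zero_right (q n : ℕ) : gaussQ q n 0 = 1 := by simp [gaussQ]

theorem gaussQ_of_lt {q n m : ℕ} (h : n < m) : gaussQ q n m = 0 :=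
  prod_eq_zero (mem_range.2 h) (by simp)

theorem gaussQ_succ_succ_eq_mul (q n m : ℕ) :
    gaussQ q (n + 1) (m + 1) =
      gaussQ q n m * (((q : ℚ) ^ (n + 1) - 1) / ((q : ℚ) ^ (m + 1) - 1)) := by
  simp [gaussQ, prod_range_succ', mul_div_mul_comm]

theorem gaussQ_succ_right_eq_mul (q n m : ℕ) :
    gaussQ q n (m + 1) =
      gaussQ q n m * (((q : ℚ) ^ (n - m) - 1) / ((q : ℚ) ^ (m + 1) - 1)) := by
  simp only [gaussQ, prod_div_distrib]
  rw [prod_range_succ, prod_range_succ' (fun i => (q : ℚ) ^ (m + 1 - i) - 1), mul_div_mul_comm]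
  simp

theorem gaussQ_succ_succ {q : ℕ} (hq : 1 < q) (n m : ℕ) :
    gaussQ q (n + 1) (m + 1) = gaussQ q n (m + 1) + (q : ℚ) ^ (n - m) * gaussQ q n m := by
  rcases lt_or_ge n m with h | h
  · simp [gaussQ_of_lt h, gaussQ_of_lt (Nat.succ_lt_succ h), gaussQ_of_lt (h.trans m.lt_succ_self)]
  have hq' : (1 : ℚ) < q := by exact_mod_cast hq
  have hden : (q : ℚ) ^ (m + 1) - 1 ≠ 0 := (sub_pos.2 (one_lt_pow₀ hq' m.succ_ne_zero)).ne'
  have hpow : (q : ℚ) ^ (n + 1) = (q : ℚ) ^ (n - m) * (q : ℚ) ^ (m + 1) := by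
    rw [← pow_add]
    congr 1
    omega
  rw [gaussQ_succ_succ_eq_mul, gaussQ_succ_right_eq_mul, hpow]
  field_simp
  ring

namespace IsRREF

variable {K : Type} [Field K] {k n : ℕ} {N N' : Matrix (Fin k) (Fin n) K} {p p' : Fin k → Fin n}

theorem sum_smul_apply_pivot (h : IsRREF N p) (c : Fin k → K) (i : Fin k) :
    (∑ i', c i' • N i') (p i) = c i := by
  rw [Finset.sum_apply, sum_eq_single i (fun i' _ hi' => by simp [h.2.2.2 i i' hi']) (by simp)]
  simp [h.2.1 i]

theorem sum_smul_apply_of_lt (h : IsRREF N p) {c : Fin k → K} {i₀ : Fin k}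
    (hc : ∀ i < i₀, c i = 0) {col : Fin n} (hcol : col < p i₀) :
    (∑ i', c i' • N i') col = 0 := by
  refine (Finset.sum_apply _ _ _).trans (sum_eq_zero fun i _ => ?_)
  rcases lt_or_ge i i₀ with hi | hi
  · simp [hc i hi]
  · simp [h.2.2.1 i col (hcol.trans_le (h.1.monotone hi))]

/-- A row of `N` has the pivot of the first row of `N'` occurring in its expansion. -/
theorem range_subset_of_span_le (h : IsRREF N p) (h' : IsRREF N' p')
    (hs : Submodule.span K (Set.range N) ≤ Submodule.span K (Set.range N')) :
    Set.range p ⊆ Set.range p' := by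
  rintro _ ⟨i, rfl⟩
  obtain ⟨c, hc⟩ :=
    (Submodule.mem_span_range_iff_exists_fun K).1 (hs (Submodule.subset_span ⟨i, rfl⟩))
  have hc_ne : ∃ i', c i' ≠ 0 := by
    by_contra! hzero
    have := h.2.1 i
    simp [← hc, hzero] at this
  obtain ⟨i₀, hi₀, hmin⟩ := wellFounded_lt.has_min {i' | c i' ≠ 0} hc_ne
  have hbefore : ∀ i' < i₀, c i' = 0 := fun i' hi' => not_not.1 fun hne => hmin i' hne hi'
  rcases lt_trichotomy (p i) (p' i₀) with hlt | heq | hgt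
  · have := h'.sum_smul_apply_of_lt hbefore hlt
    rw [hc, h.2.1] at this
    exact absurd this one_ne_zero
  · exact ⟨i₀, heq.symm⟩
  · have := h'.sum_smul_apply_pivot c i₀
    rw [hc, h.2.2.1 i _ hgt] at this
    exact absurd this.symm hi₀

theorem eq_of_span_eq (h : IsRREF N p) (h' : IsRREF N' p')
    (hs : Submodule.span K (Set.range N) = Submodule.span K (Set.range N')) :
    N = N' ∧ p = p' := by
  obtain rfl : p = p' := (h.1.range_inj h'.1).1 <|
    (h.range_subset_of_span_le h' hs.le).antisymm (h'.range_subset_of_span_le h hs.ge)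
  refine ⟨funext fun i => ?_, rfl⟩
  obtain ⟨c, hc⟩ := (Submodule.mem_span_range_iff_exists_fun K).1
    (hs ▸ Submodule.subset_span (Set.mem_range_self i))
  have hc_single : c = Pi.single i 1 := funext fun i' => by
    rw [← h'.sum_smul_apply_pivot c i', hc]
    rcases eq_or_ne i' i with rfl | hne
    · simp [h.2.1]
    · simp [hne, h.2.2.2 i' i hne.symm]
  rw [← hc, hc_single]
  exact (Fintype.sum_single_smul (fun x => N' x) (1 : K) i).trans (one_smul K _)

end IsRREF

abbrev RREFForm (K : Type) [Field K] (k n : ℕ) :=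
  {p : Matrix (Fin k) (Fin n) K × (Fin k → Fin n) // IsRREF p.1 p.2}

theorem card_subspaces_eq_card_rrefForm {K : Type} [Field K] {k n : ℕ}
    (P : Matrix (Fin k) (Fin n) K → (Fin k → Fin n) → Prop) :
    Nat.card {Y : Submodule K (Fin n → K) //
        ∃ N p, IsRREF N p ∧ Submodule.span K (Set.range N) = Y ∧ P N p} =
      Nat.card {x : RREFForm K k n // P x.1.1 x.1.2} := by
  refine (Nat.card_eq_of_bijective (fun x => ⟨Submodule.span K (Set.range x.1.1.1),
    x.1.1.1, x.1.1.2, x.1.2, rfl, x.2⟩) ⟨fun x y hxy => ?_, ?_⟩).symm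
  · obtain ⟨hN, hp⟩ := x.1.2.eq_of_span_eq y.1.2 (congrArg Subtype.val hxy)
    exact Subtype.ext (Subtype.ext (Prod.ext hN hp))
  · rintro ⟨Y, N, p, h, rfl, hP⟩
    exact ⟨⟨⟨(N, p), h⟩, hP⟩, rfl⟩

section FirstColumn

open Matrix

variable {K : Type} [Field K] {m r : ℕ}

theorem isRREF_vecCons_zero_iff {N : Matrix (Fin m) (Fin r) K} {p : Fin m → Fin r} :
    IsRREF (fun i => vecCons 0 (N i)) (fun i => (p i).succ) ↔ IsRREF N p := by
  simp [IsRREF, StrictMono, Fin.forall_fin_succ, Fin.succ_lt_succ_iff]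

theorem isRREF_vecCons_vecCons_iff {N : Matrix (Fin m) (Fin r) K} {p : Fin m → Fin r}
    {f : Fin r → K} :
    IsRREF (vecCons (vecCons 1 f) fun i => vecCons 0 (N i)) (vecCons 0 fun i => (p i).succ) ↔
      IsRREF N p ∧ ∀ i, f (p i) = 0 := by
  simp [IsRREF, StrictMono, Fin.forall_fin_succ, Fin.succ_lt_succ_iff, (Fin.succ_ne_zero _).symm,
    forall_and]
  tauto

theorem IsRREF.eq_vecCons_zero {N : Matrix (Fin m) (Fin (r + 1)) K} {p : Fin m → Fin (r + 1)}
    (h : IsRREF N p) (hp : ∀ i, p i ≠ 0) :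
    (fun i => vecCons 0 (vecTail (N i)) : Matrix _ _ K) = N := by
  ext i c
  cases c using Fin.cases with
  | zero => exact (h.2.2.1 i 0 (Fin.pos_iff_ne_zero.2 (hp i))).symm
  | succ c => rfl

theorem IsRREF.eq_vecCons_vecCons {N : Matrix (Fin (m + 1)) (Fin (r + 1)) K}
    {p : Fin (m + 1) → Fin (r + 1)} (h : IsRREF N p) (hp : p 0 = 0) :
    (vecCons (vecCons 1 (vecTail (N 0))) fun i => vecCons 0 (vecTail (N i.succ)) :
      Matrix _ _ K) = N := by
  ext i c
  cases i using Fin.cases with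
  | zero => cases c using Fin.cases with
    | zero => simpa [hp] using (h.2.1 0).symm
    | succ c => rfl
  | succ i => cases c using Fin.cases with
    | zero => simpa [hp] using (h.2.2.2 0 i.succ (Fin.succ_ne_zero i)).symm
    | succ c => rfl

theorem vecCons_zero_succ_pred {p : Fin (m + 1) → Fin (r + 1)} (hp : p 0 = 0)
    (hs : ∀ i, p i.succ ≠ 0) : (vecCons 0 fun i => ((p i.succ).pred (hs i)).succ) = p := by
  ext i
  cases i using Fin.cases <;> simp [hp]

theorem IsRREF.pivot_succ_ne_zero {N : Matrix (Fin (m + 1)) (Fin (r + 1)) K}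
    {p : Fin (m + 1) → Fin (r + 1)} (h : IsRREF N p) (hp : p 0 = 0) (i : Fin m) :
    p i.succ ≠ 0 :=
  hp ▸ (h.1 (Fin.succ_pos i)).ne'

theorem IsRREF.of_pivot_zero {N : Matrix (Fin (m + 1)) (Fin (r + 1)) K}
    {p : Fin (m + 1) → Fin (r + 1)} (h : IsRREF N p) (hp : p 0 = 0) :
    IsRREF (fun i => vecTail (N i.succ)) (fun i => (p i.succ).pred (h.pivot_succ_ne_zero hp i)) ∧
      ∀ i, vecTail (N 0) ((p i.succ).pred (h.pivot_succ_ne_zero hp i)) = 0 :=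
  isRREF_vecCons_vecCons_iff.1 <| by
    rwa [h.eq_vecCons_vecCons hp, vecCons_zero_succ_pred hp (h.pivot_succ_ne_zero hp)]

variable (K m r)

def rrefFormNoPivotZeroEquiv :
    {x : RREFForm K m (r + 1) // ∀ i, x.1.2 i ≠ 0} ≃ RREFForm K m r where
  toFun x := ⟨(fun i => vecTail (x.1.1.1 i), fun i => (x.1.1.2 i).pred (x.2 i)),
    isRREF_vecCons_zero_iff.1 <| by simpa [x.1.2.eq_vecCons_zero x.2] using x.1.2⟩
  invFun y := ⟨⟨(fun i => vecCons 0 (y.1.1 i), fun i => (y.1.2 i).succ),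
    isRREF_vecCons_zero_iff.2 y.2⟩, fun i => Fin.succ_ne_zero _⟩
  left_inv x := by
    ext : 3
    · exact x.1.2.eq_vecCons_zero x.2
    · simp
  right_inv y := rfl

def rrefFormPivotZeroEquiv : {x : RREFForm K (m + 1) (r + 1) // x.1.2 0 = 0} ≃
    Σ y : RREFForm K m r, {f : Fin r → K // ∀ i, f (y.1.2 i) = 0} where
  toFun x := ⟨⟨(fun i => vecTail (x.1.1.1 i.succ),
      fun i => (x.1.1.2 i.succ).pred (x.1.2.pivot_succ_ne_zero x.2 i)),
      (x.1.2.of_pivot_zero x.2).1⟩,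
    ⟨vecTail (x.1.1.1 0), (x.1.2.of_pivot_zero x.2).2⟩⟩
  invFun y := ⟨⟨(vecCons (vecCons 1 y.2.1) fun i => vecCons 0 (y.1.1.1 i),
    vecCons 0 fun i => (y.1.1.2 i).succ), isRREF_vecCons_vecCons_iff.2 ⟨y.1.2, y.2.2⟩⟩, rfl⟩
  left_inv x := by
    ext : 3
    · exact x.1.2.eq_vecCons_vecCons x.2
    · exact vecCons_zero_succ_pred x.2 (x.1.2.pivot_succ_ne_zero x.2)
  right_inv y := rfl

end FirstColumn

theorem card_vanishing_on_range {K : Type} [Fintype K] [Zero K] {m r : ℕ} {g : Fin m → Fin r}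
    (hg : Function.Injective g) :
    Nat.card {f : Fin r → K // ∀ i, f (g i) = 0} = Fintype.card K ^ (r - m) := by
  classical
  have e : {f : Fin r → K // ∀ i, f (g i) = 0} ≃
      ∀ c, {x : K // c ∈ Set.range g → x = 0} :=
    (Equiv.subtypeEquivRight fun f => by simp).trans Equiv.subtypePiEquivPi
  have hcard : ∀ c, Nat.card {x : K // c ∈ Set.range g → x = 0} =
      if c ∈ Set.range g then 1 else Fintype.card K := fun c => by
    split_ifs with hc <;> simp [hc]
  have hcompl : (univ.filter fun c => c ∉ Set.range g) = (univ.image g)ᶜ := by ext; simp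
  rw [Nat.card_congr e, Nat.card_pi, prod_congr rfl fun c _ => hcard c, prod_ite, prod_const_one,
    one_mul, prod_const, hcompl, card_compl, card_image_of_injective _ hg]
  simp

section CardRREFForm

variable {K : Type} [Field K]

theorem card_rrefForm_zero_left (r : ℕ) : Nat.card (RREFForm K 0 r) = 1 :=
  Nat.card_eq_one_iff_unique.2
    ⟨⟨fun x y => Subtype.ext (Prod.ext (Subsingleton.elim _ _) (Subsingleton.elim _ _))⟩,
      ⟨⟨(0, finZeroElim), by simp [IsRREF, StrictMono]⟩⟩⟩

variable [Fintype K]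

theorem card_rrefForm_succ_succ (m r : ℕ) :
    Nat.card (RREFForm K (m + 1) (r + 1)) =
      Nat.card (RREFForm K (m + 1) r) + Fintype.card K ^ (r - m) * Nat.card (RREFForm K m r) := by
  have hsplit := Nat.card_congr (Equiv.sumCompl fun x : RREFForm K (m + 1) (r + 1) => x.1.2 0 = 0)
  have hno : {x : RREFForm K (m + 1) (r + 1) // ¬x.1.2 0 = 0} ≃
      {x : RREFForm K (m + 1) (r + 1) // ∀ i, x.1.2 i ≠ 0} :=
    Equiv.subtypeEquivRight fun x =>
      ⟨fun h0 i hi => h0 (le_antisymm (hi ▸ x.2.1.monotone (Fin.zero_le i)) (Fin.zero_le _)),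
        fun h => h 0⟩
  have := Fintype.ofFinite (RREFForm K m r)
  rw [← hsplit, Nat.card_sum, Nat.card_congr (rrefFormPivotZeroEquiv K m r), Nat.card_sigma,
    Nat.card_congr (hno.trans (rrefFormNoPivotZeroEquiv K (m + 1) r)),
    sum_congr rfl fun x _ => card_vanishing_on_range x.2.1.injective, sum_const, card_univ,
    smul_eq_mul, ← Nat.card_eq_fintype_card]
  ring

theorem card_rrefForm (m r : ℕ) :
    (Nat.card (RREFForm K m r) : ℚ) = gaussQ (Fintype.card K) r m := by
  induction r generalizing m with
  | zero => cases m with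
    | zero => simp [card_rrefForm_zero_left, gaussQ_zero_right]
    | succ m => simp [gaussQ_of_lt m.succ_pos]
  | succ r ih => cases m with
    | zero => simp [card_rrefForm_zero_left, gaussQ_zero_right]
    | succ m =>
      rw [card_rrefForm_succ_succ, gaussQ_succ_succ Fintype.one_lt_card, ← ih, ← ih]
      push_cast
      ring

end CardRREFForm

section Pivots

variable {k n : ℕ}

theorem StrictMono.card_range_ge {p : Fin k → Fin n} (hp : StrictMono p) (i : Fin k) :
    #{c | p i ≤ c ∧ ∃ i', p i' = c} = k - i := by
  have : (univ.filter fun c => p i ≤ c ∧ ∃ i', p i' = c) =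
      (Ici i).map ⟨p, hp.injective⟩ := by
    ext c
    simp only [mem_filter, mem_univ, true_and, mem_map, mem_Ici, Function.Embedding.coeFn_mk]
    constructor
    · rintro ⟨hc, i', rfl⟩
      exact ⟨i', hp.le_iff_le.1 hc, rfl⟩
    · rintro ⟨i', hi', rfl⟩
      exact ⟨hp.monotone hi', i', rfl⟩
  rw [this, card_map, Fin.card_Ici]

/-- The row index is recovered by counting the pivots to the right of its pivot. -/
theorem StrictMono.eq_of_range_ge_iff {p p' : Fin k → Fin n} (hp : StrictMono p)
    (hp' : StrictMono p') {r : ℕ}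
    (h : ∀ c : Fin n, r ≤ (c : ℕ) → ((∃ i, p' i = c) ↔ ∃ i, p i = c))
    {i : Fin k} (hi : r ≤ (p i : ℕ)) : p' i = p i := by
  obtain ⟨i', hi'⟩ := (h _ hi).2 ⟨i, rfl⟩
  have hsets : (univ.filter fun c => p' i' ≤ c ∧ ∃ i, p' i = c) =
      univ.filter fun c => p i ≤ c ∧ ∃ i', p i' = c := by
    ext c
    simp only [mem_filter, mem_univ, true_and, hi']
    exact and_congr_right fun hc => h c (hi.trans hc)
  have hcard := hp'.card_range_ge i'
  rw [hsets, hp.card_range_ge i] at hcard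
  obtain rfl : i' = i := Fin.ext (by omega)
  exact hi'

theorem Monotone.le_iff_card_filter_le {α : Type*} [Preorder α] [DecidableLE α]
    {p : Fin k → α} (hp : Monotone p) (r : α) (i : Fin k) :
    r ≤ p i ↔ k - #{i | r ≤ p i} ≤ i := by
  constructor
  · intro hi
    have : Ici i ⊆ univ.filter fun i => r ≤ p i := fun i' hi' => by
      simpa using hi.trans (hp (mem_Ici.1 hi'))
    have := card_le_card this
    rw [Fin.card_Ici] at this
    omega
  · intro hi
    by_contra hni
    have : (univ.filter fun i => r ≤ p i) ⊆ Ioi i := fun i' hi' => by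
      simp only [mem_filter, mem_univ, true_and] at hi'
      exact mem_Ioi.2 (lt_of_not_ge fun hle => hni (hi'.trans (hp hle)))
    have := card_le_card this
    rw [Fin.card_Ioi] at this
    omega

end Pivots

section Glue

variable {α : Type*} {k n m r : ℕ}

/-- `∃ i, p i = c` is the entry in column `c` of the identifying vector of `(N, p)`, so this says
that the extended representations of `(N, p)` and `(M, piv)` agree in the columns of index
`≥ r`. -/
def ExtAgreeFrom (r : ℕ) (N M : Matrix (Fin k) (Fin n) α) (p piv : Fin k → Fin n) : Prop :=
  ∀ c : Fin n, r ≤ (c : ℕ) →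
    (((∃ i, p i = c) ↔ (∃ i, piv i = c)) ∧ ∀ i, N i c = M i c)

def blockGlue (B : Matrix (Fin m) (Fin r) α) (M : Matrix (Fin k) (Fin n) α) :
    Matrix (Fin k) (Fin n) α :=
  fun i c => if h : (i : ℕ) < m ∧ (c : ℕ) < r then B ⟨i, h.1⟩ ⟨c, h.2⟩ else M i c

def pivotGlue (hr : r ≤ n) (pB : Fin m → Fin r) (piv : Fin k → Fin n) : Fin k → Fin n :=
  fun i => if h : (i : ℕ) < m then Fin.castLE hr (pB ⟨i, h⟩) else piv i

variable {B : Matrix (Fin m) (Fin r) α} {M : Matrix (Fin k) (Fin n) α} {pB : Fin m → Fin r}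
  {piv : Fin k → Fin n} {i : Fin k}

theorem blockGlue_of_lt {c : Fin n} (hi : (i : ℕ) < m) (hc : (c : ℕ) < r) :
    blockGlue B M i c = B ⟨i, hi⟩ ⟨c, hc⟩ :=
  dif_pos ⟨hi, hc⟩

theorem blockGlue_of_ge {c : Fin n} (h : m ≤ (i : ℕ) ∨ r ≤ (c : ℕ)) :
    blockGlue B M i c = M i c :=
  dif_neg (by omega)

theorem blockGlue_castLE (hi : (i : ℕ) < m) (hr : r ≤ n) (c : Fin r) :
    blockGlue B M i (Fin.castLE hr c) = B ⟨i, hi⟩ c :=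
  blockGlue_of_lt (c := Fin.castLE hr c) hi c.2

theorem pivotGlue_of_lt {hr : r ≤ n} (hi : (i : ℕ) < m) :
    pivotGlue hr pB piv i = Fin.castLE hr (pB ⟨i, hi⟩) :=
  dif_pos hi

theorem pivotGlue_of_ge {hr : r ≤ n} (hi : m ≤ (i : ℕ)) : pivotGlue hr pB piv i = piv i :=
  dif_neg (by omega)

theorem extAgreeFrom_blockGlue (hr : r ≤ n)
    (htail : ∀ i, r ≤ (piv i : ℕ) ↔ m ≤ (i : ℕ)) :
    ExtAgreeFrom r (blockGlue B M) M (pivotGlue hr pB piv) piv := by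
  refine fun c hc => ⟨⟨?_, ?_⟩, fun i => blockGlue_of_ge (Or.inr hc)⟩
  · rintro ⟨i, rfl⟩
    rcases lt_or_ge (i : ℕ) m with hi | hi
    · rw [pivotGlue_of_lt hi] at hc
      exact absurd (pB _).2 hc.not_gt
    · exact ⟨i, (pivotGlue_of_ge hi).symm⟩
  · rintro ⟨i, rfl⟩
    exact ⟨i, pivotGlue_of_ge ((htail i).1 hc)⟩

end Glue

section Block

variable {K : Type} [Field K] {k n m r : ℕ}

theorem IsRREF.submatrix_castLE {N : Matrix (Fin k) (Fin n) K} {p : Fin k → Fin n}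
    (h : IsRREF N p) (hm : m ≤ k) (hr : r ≤ n)
    (hlt : ∀ i : Fin m, (p (Fin.castLE hm i) : ℕ) < r) :
    IsRREF (N.submatrix (Fin.castLE hm) (Fin.castLE hr))
      (fun i => (p (Fin.castLE hm i)).castLT (hlt i)) := by
  obtain ⟨hmono, hone, hleft, hcol⟩ := h
  exact ⟨fun a b hab => hmono ((Fin.castLE_lt_castLE_iff hm).2 hab), fun i => hone _,
    fun i c hc => hleft _ _ hc, fun i i' hne => hcol _ _ fun h => hne (Fin.castLE_injective hm h)⟩

theorem IsRREF.blockGlue {B : Matrix (Fin m) (Fin r) K} {pB : Fin m → Fin r}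
    {M : Matrix (Fin k) (Fin n) K} {piv : Fin k → Fin n} (hB : IsRREF B pB) (hM : IsRREF M piv)
    (hr : r ≤ n) (htail : ∀ i, r ≤ (piv i : ℕ) ↔ m ≤ (i : ℕ)) :
    IsRREF (blockGlue B M) (pivotGlue hr pB piv) := by
  obtain ⟨hmonoB, honeB, hleftB, hcolB⟩ := hB
  obtain ⟨hmono, hone, hleft, hcol⟩ := hM
  refine ⟨fun a b hab => ?_, fun i => ?_, fun i c hc => ?_, fun i i' hne => ?_⟩
  · rcases lt_or_ge (b : ℕ) m with hb | hb
    · have ha : (a : ℕ) < m := lt_trans hab hb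
      rw [pivotGlue_of_lt ha, pivotGlue_of_lt hb]
      exact hmonoB (show (⟨a, ha⟩ : Fin m) < ⟨b, hb⟩ from hab)
    rw [pivotGlue_of_ge hb]
    rcases lt_or_ge (a : ℕ) m with ha | ha
    · rw [pivotGlue_of_lt ha, Fin.lt_def]
      exact lt_of_lt_of_le (pB _).2 ((htail b).2 hb)
    · rw [pivotGlue_of_ge ha]
      exact hmono hab
  · rcases lt_or_ge (i : ℕ) m with hi | hi
    · rw [pivotGlue_of_lt hi, blockGlue_castLE hi]
      exact honeB _
    · rw [pivotGlue_of_ge hi, blockGlue_of_ge (Or.inl hi)]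
      exact hone i
  · rcases lt_or_ge (i : ℕ) m with hi | hi
    · rw [pivotGlue_of_lt hi] at hc
      rw [blockGlue_of_lt hi (hc.trans (pB _).2)]
      exact hleftB _ _ hc
    · rw [pivotGlue_of_ge hi] at hc
      rw [blockGlue_of_ge (Or.inl hi)]
      exact hleft i c hc
  · rcases lt_or_ge (i : ℕ) m with hi | hi
    · rw [pivotGlue_of_lt hi]
      rcases lt_or_ge (i' : ℕ) m with hi' | hi'
      · rw [blockGlue_castLE hi']
        exact hcolB _ _ fun h => hne (Fin.ext (Fin.mk.inj_iff.1 h))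
      · rw [blockGlue_of_ge (Or.inl hi')]
        exact hleft _ _ ((pB _).2.trans_le ((htail i').2 hi'))
    · rw [pivotGlue_of_ge hi, blockGlue_of_ge (Or.inr ((htail i).2 hi))]
      exact hcol i i' hne

variable {M N : Matrix (Fin k) (Fin n) K} {piv p : Fin k → Fin n} (h : IsRREF N p)
  (hagree : ExtAgreeFrom r N M p piv) (hM : IsRREF M piv)
  (htail : ∀ i, r ≤ (piv i : ℕ) ↔ m ≤ (i : ℕ))

include h hagree hM htail

theorem IsRREF.pivot_eq_of_extAgreeFrom {i : Fin k} (hi : m ≤ (i : ℕ)) : p i = piv i :=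
  hM.1.eq_of_range_ge_iff h.1 (fun c hc => (hagree c hc).1) ((htail i).2 hi)

theorem IsRREF.pivot_lt_of_extAgreeFrom {i : Fin k} (hi : (i : ℕ) < m) : (p i : ℕ) < r := by
  by_contra! hle
  have := h.1.eq_of_range_ge_iff hM.1 (fun c hc => (hagree c hc).1.symm) hle
  exact hi.not_ge ((htail i).1 (this ▸ hle))

theorem blockGlue_submatrix_eq (hm : m ≤ k) (hr : r ≤ n) :
    blockGlue (N.submatrix (Fin.castLE hm) (Fin.castLE hr)) M = N := by
  ext i c
  by_cases hic : (i : ℕ) < m ∧ (c : ℕ) < r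
  · exact blockGlue_of_lt hic.1 hic.2
  rw [blockGlue_of_ge (by omega)]
  rcases le_or_gt r c with hc | hc
  · exact ((hagree c hc).2 i).symm
  have hi : m ≤ (i : ℕ) := by omega
  have hpiv := (htail i).2 hi
  rw [hM.2.2.1 i c (by omega),
    h.2.2.1 i c (by rw [h.pivot_eq_of_extAgreeFrom hagree hM htail hi]; omega)]

end Block

def extAgreeFromEquiv {K : Type} [Field K] {k n m r : ℕ} {M : Matrix (Fin k) (Fin n) K}
    {piv : Fin k → Fin n} (hM : IsRREF M piv)
    (htail : ∀ i, r ≤ (piv i : ℕ) ↔ m ≤ (i : ℕ)) (hm : m ≤ k) (hr : r ≤ n) :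
    {x : RREFForm K k n // ExtAgreeFrom r x.1.1 M x.1.2 piv} ≃ RREFForm K m r where
  toFun x := ⟨(x.1.1.1.submatrix (Fin.castLE hm) (Fin.castLE hr), fun i => (x.1.1.2 _).castLT
      (x.1.2.pivot_lt_of_extAgreeFrom x.2 hM htail (i := Fin.castLE hm i) i.2)),
    x.1.2.submatrix_castLE hm hr _⟩
  invFun y := ⟨⟨(blockGlue y.1.1 M, pivotGlue hr y.1.2 piv), y.2.blockGlue hM hr htail⟩,
    extAgreeFrom_blockGlue hr htail⟩
  left_inv x := by
    ext : 3
    · exact blockGlue_submatrix_eq x.1.2 x.2 hM htail hm hr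
    · funext i
      change pivotGlue hr _ piv i = _
      rcases lt_or_ge (i : ℕ) m with hi | hi
      · exact pivotGlue_of_lt hi
      · rw [pivotGlue_of_ge hi, x.1.2.pivot_eq_of_extAgreeFrom x.2 hM htail hi]
  right_inv y := by
    ext : 2
    · funext i c
      exact blockGlue_castLE (B := y.1.1) (M := M) (i := Fin.castLE hm i) i.2 hr c
    · funext i
      refine Fin.ext ?_
      change (pivotGlue hr y.1.2 piv (Fin.castLE hm i) : ℕ) = y.1.2 i
      rw [pivotGlue_of_lt (i := Fin.castLE hm i) i.2]
      rfl

open scoped Classical in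
/-- In the paper's right-to-left numbering, the first `j` columns are those of Lean index
`≥ n - j`; `w_j` is the number of pivots of `X` among them. -/
theorem card_subspaces_with_ext_prefix_general (Fq : Type) [Field Fq] [Fintype Fq]
    (n k j : ℕ)
    (M : Matrix (Fin k) (Fin n) Fq) (piv : Fin k → Fin n) (hM : IsRREF M piv) :
    (Nat.card {Y : Submodule Fq (Fin n → Fq) //
        ∃ (N : Matrix (Fin k) (Fin n) Fq) (piv' : Fin k → Fin n),
          IsRREF N piv' ∧ Submodule.span Fq (Set.range fun i => N i) = Y ∧
          ∀ c : Fin n, n - j ≤ (c : ℕ) →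
            (((∃ i, piv' i = c) ↔ (∃ i, piv i = c)) ∧ ∀ i, N i c = M i c) } : ℚ)
      = gaussQ (Fintype.card Fq) (n - j)
          (k - (Finset.univ.filter (fun i => n - j ≤ (piv i : ℕ))).card) := by
  have htail := hM.1.monotone.le_iff_card_filter_le (p := fun i => (piv i : ℕ)) (n - j)
  rw [← card_rrefForm,
    ← Nat.card_congr (extAgreeFromEquiv hM htail (Nat.sub_le _ _) (Nat.sub_le _ _))]
  exact congrArg Nat.cast (card_subspaces_eq_card_rrefForm _)

open scoped Classical in
/-- Fix a `k`-dimensional subspace `X` of `F_q^n` with RREF matrix `M` and pivots `piv`.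
The number of `k`-dimensional subspaces `Y` of `F_q^n` whose extended representation
(identifying vector stacked over RREF) agrees with that of `X` on the first `j` columns
(in the paper's right-to-left numbering, these are the columns with Lean index `≥ n - j`)
equals `[n-j choose k-w_j]_q`, where `w_j` is the number of pivots of `X` among those
columns. -/
theorem card_subspaces_with_ext_prefix (Fq : Type) [Field Fq] [Fintype Fq]
    (n k j : ℕ) (hk : k ≤ n) (hj : j ≤ n)
    (M : Matrix (Fin k) (Fin n) Fq) (piv : Fin k → Fin n) (hM : IsRREF M piv) :
    (Nat.card {Y : Submodule Fq (Fin n → Fq) //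
        ∃ (N : Matrix (Fin k) (Fin n) Fq) (piv' : Fin k → Fin n),
          IsRREF N piv' ∧ Submodule.span Fq (Set.range fun i => N i) = Y ∧
          ∀ c : Fin n, n - j ≤ (c : ℕ) →
            (((∃ i, piv' i = c) ↔ (∃ i, piv i = c)) ∧ ∀ i, N i c = M i c) } : ℚ)
      = gaussQ (Fintype.card Fq) (n - j)
          (k - (Finset.univ.filter (fun i => n - j ≤ (piv i : ℕ))).card) :=
  card_subspaces_with_ext_prefix_general Fq n k j M piv hM
end

section
/- Let S be a finite subset of A^n for a finite totally ordered alphabet A, with lexicographic order (x < y iff x_k < y_k at the least index k where they differ). For x ∈ S, the number of elements of S strictly less than x equals ∑_{j=1}^n ∑_{m < x_j} n_S(x_1,...,x_{j-1},m), where n_S(x_1,...,x_j) is the number of elements of S whose first j coordinates are (x_1,...,x_j). -/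
open Finset

/-! The elements of `S` below `x` are partitioned by the first index `j` at which they differ
from `x`, and then by their value `m < x j` at that index; the block for `(j, m)` is exactly
the set counted by `n_S(x_1, …, x_{j-1}, m)`. -/

lemma eq_of_forall_lt_apply_eq_of_apply_ne {ι β : Type*} [LinearOrder ι] {x y : ι → β} {j k : ι}
    (hj : ∀ i < j, y i = x i) (hyj : y j ≠ x j) (hk : ∀ i < k, y i = x i) (hyk : y k ≠ x k) :
    j = k := by
  rcases lt_trichotomy j k with hjk | hjk | hkj
  · exact absurd (hk j hjk) hyj
  · exact hjk
  · exact absurd (hj k hkj) hyk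

lemma Finset.card_filter_exists_eq_sum {ι α : Type*} [Fintype ι] (s : Finset α)
    (p : ι → α → Prop) [∀ i, DecidablePred (p i)] [DecidablePred fun a => ∃ i, p i a]
    (hp : ∀ a ∈ s, ∀ i j, p i a → p j a → i = j) :
    #(s.filter fun a => ∃ i, p i a) = ∑ i, #(s.filter (p i)) := by
  classical
  have hunion : s.filter (fun a => ∃ i, p i a) = univ.biUnion fun i => s.filter (p i) := by
    ext a
    simp only [mem_filter, mem_biUnion, mem_univ, true_and]
    tauto
  rw [hunion, card_biUnion]
  intro i _ j _ hij
  refine disjoint_left.2 fun a hai haj => hij ?_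
  rw [mem_filter] at hai haj
  exact hp a hai.1 i j hai.2 haj.2

lemma Finset.card_filter_and_eq_sum_fiberwise {α β : Type*} [Fintype β] [DecidableEq β]
    (s : Finset α) (p : α → Prop) (f : α → β) (r : β → Prop) [DecidablePred p]
    [DecidablePred r] :
    #(s.filter fun a => p a ∧ r (f a)) =
      ∑ b ∈ univ.filter r, #(s.filter fun a => p a ∧ f a = b) := by
  rw [card_eq_sum_card_fiberwise (f := f) (t := univ.filter r)]
  · refine sum_congr rfl fun b hb => congrArg card ?_
    rw [mem_filter] at hb
    ext a
    simp only [mem_filter]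
    constructor
    · rintro ⟨⟨ha, hpa, -⟩, rfl⟩
      exact ⟨ha, hpa, rfl⟩
    · rintro ⟨ha, hpa, rfl⟩
      exact ⟨⟨ha, hpa, hb.2⟩, rfl⟩
  · intro a ha
    exact mem_filter.2 ⟨mem_univ _, (mem_filter.1 ha).2.2⟩

theorem cover_enumerative_formula_general (n : ℕ) (A : Type) [Fintype A] [LinearOrder A]
    [DecidableEq A] (S : Finset (Fin n → A)) (x : Fin n → A) :
    (S.filter (fun y =>
        ∃ j : Fin n, (∀ i : Fin n, i < j → y i = x i) ∧ y j < x j)).card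
      = ∑ j : Fin n, ∑ m ∈ (Finset.univ : Finset A).filter (fun m => m < x j),
          (S.filter (fun y => (∀ i : Fin n, i < j → y i = x i) ∧ y j = m)).card := by
  calc _ = ∑ j : Fin n, #(S.filter fun y => (∀ i < j, y i = x i) ∧ y j < x j) :=
        card_filter_exists_eq_sum S _ fun y _ j k hj hk =>
          eq_of_forall_lt_apply_eq_of_apply_ne hj.1 hj.2.ne hk.1 hk.2.ne
    _ = _ := sum_congr rfl fun j _ =>
        card_filter_and_eq_sum_fiberwise S _ (fun y => y j) (· < x j)

/-- Cover's enumerative coding formula: for `S ⊆ A^n` with `A` a finite totally ordered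
alphabet and the lexicographic order (`y < x` iff `y` is smaller at the least index where
they differ), the number of elements of `S` strictly less than `x ∈ S` equals
`∑_{j=1}^n ∑_{m < x_j} n_S(x_1,…,x_{j-1},m)`. -/
theorem cover_enumerative_formula (n : ℕ) (A : Type) [Fintype A] [LinearOrder A]
    [DecidableEq A] (S : Finset (Fin n → A)) (x : Fin n → A) (hx : x ∈ S) :
    (S.filter (fun y =>
        ∃ j : Fin n, (∀ i : Fin n, i < j → y i = x i) ∧ y j < x j)).card
      = ∑ j : Fin n, ∑ m ∈ (Finset.univ : Finset A).filter (fun m => m < x j),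
          (S.filter (fun y => (∀ i : Fin n, i < j → y i = x i) ∧ y j = m)).card :=
  cover_enumerative_formula_general n A S x
end

section
/- For integers q ≥ 2 and 0 < k < n, the Gaussian binomial coefficient satisfies q^{k(n-k)} < [n choose k]_q < 4·q^{k(n-k)}. -/
open Finset

lemma aux_prod (Q : ℚ) (hQ : 2 ≤ Q) :
    ∀ k, 1 ≤ k → ∏ j ∈ Finset.range k, Q ^ (j+1) / (Q ^ (j+1) - 1) ≤ 4 * (1 - (Q⁻¹) ^ k) := by
  have hQ0 : (0:ℚ) < Q := by linarith
  have hQ1 : (1:ℚ) < Q := by linarith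
  intro k hk
  induction k, hk using Nat.le_induction with
  | base =>
    rw [Finset.prod_range_one, pow_one]
    have h1 : (0:ℚ) < Q - 1 := by linarith
    have key : (1:ℚ) - Q⁻¹ = (Q - 1) / Q := by field_simp
    rw [pow_one, key, div_le_iff₀ h1,
      show 4 * ((Q - 1) / Q) * (Q - 1) = 4 * (Q - 1) * (Q - 1) / Q by ring, le_div_iff₀ hQ0]
    nlinarith [mul_nonneg (by linarith : (0:ℚ) ≤ 3*Q-2) (by linarith : (0:ℚ) ≤ Q-2)]
  | succ k hk ih =>
    rw [Finset.prod_range_succ]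
    have hx : (1:ℚ) ≤ Q ^ k := one_le_pow₀ (le_of_lt hQ1)
    have hxk : (1:ℚ) < Q ^ (k+1) := one_lt_pow₀ hQ1 (by omega)
    have hb : (0:ℚ) < Q ^ (k+1) - 1 := by linarith
    have hterm : (0:ℚ) < Q ^ (k+1) / (Q ^ (k+1) - 1) := by positivity
    have step : 4 * (1 - (Q⁻¹) ^ k) * (Q ^ (k+1) / (Q ^ (k+1) - 1)) ≤ 4 * (1 - (Q⁻¹) ^ (k+1)) := by
      have hQk : (0:ℚ) < Q ^ k := by positivity
      have hQk1 : (0:ℚ) < Q ^ (k+1) := by positivity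
      have key1 : (1:ℚ) - (Q⁻¹) ^ k = (Q ^ k - 1) / Q ^ k := by
        rw [inv_pow]; field_simp
      have key2 : (1:ℚ) - (Q⁻¹) ^ (k+1) = (Q ^ (k+1) - 1) / Q ^ (k+1) := by
        rw [inv_pow]; field_simp
      have lhs_eq : 4 * ((Q ^ k - 1) / Q ^ k) * (Q ^ (k+1) / (Q ^ (k+1) - 1))
          = (4 * (Q ^ k - 1) * Q ^ (k+1)) / (Q ^ k * (Q ^ (k+1) - 1)) := by
        have d1 : (Q:ℚ) ^ k ≠ 0 := ne_of_gt hQk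
        have d2 : Q ^ (k+1) - 1 ≠ 0 := ne_of_gt hb
        field_simp
      have rhs_eq : 4 * ((Q ^ (k+1) - 1) / Q ^ (k+1)) = (4 * (Q ^ (k+1) - 1)) / Q ^ (k+1) := by
        rw [mul_div_assoc]
      rw [key1, key2, lhs_eq, rhs_eq, div_le_div_iff₀ (by positivity) hQk1]
      have hpow : Q ^ (k+1) = Q * Q ^ k := by ring
      rw [hpow]
      nlinarith [mul_nonneg (mul_nonneg (mul_pos hQk hQk).le hQ0.le)
        (by linarith : (0:ℚ) ≤ Q - 2), mul_pos hQ0 hQk]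
    calc (∏ j ∈ Finset.range k, Q ^ (j+1) / (Q ^ (j+1) - 1)) * (Q ^ (k+1) / (Q ^ (k+1) - 1)) ≤
        4 * (1 - (Q⁻¹) ^ k) * (Q ^ (k+1) / (Q ^ (k+1) - 1)) := by
          exact mul_le_mul_of_nonneg_right ih (le_of_lt hterm)
      _ ≤ 4 * (1 - (Q⁻¹) ^ (k+1)) := step

/-- For `q ≥ 2` and `0 < k < n`, `q^{k(n-k)} < [n choose k]_q < 4 q^{k(n-k)}`. -/
theorem gauss_bounds (q n k : ℕ) (hq : 2 ≤ q) (h0 : 0 < k) (hk : k < n) :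
    (q : ℚ) ^ (k * (n - k)) < gaussQ q n k ∧ gaussQ q n k < 4 * (q : ℚ) ^ (k * (n - k)) := by
  set Q : ℚ := (q : ℚ) with hQdef
  have hQ : (2:ℚ) ≤ Q := by rw [hQdef]; exact_mod_cast hq
  have hQ1 : (1:ℚ) < Q := by linarith
  have hQ0 : (0:ℚ) < Q := by linarith
  have hne : (range k).Nonempty := Finset.nonempty_range_iff.mpr (by omega)
  have hbpos : ∀ i ∈ range k, (0:ℚ) < Q ^ (k - i) - 1 := by
    intro i hi
    rw [Finset.mem_range] at hi
    have : (1:ℚ) < Q ^ (k - i) := one_lt_pow₀ hQ1 (by omega)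
    linarith
  have hm1 : (1:ℚ) < Q ^ (n - k) := one_lt_pow₀ hQ1 (by omega)
  constructor
  · -- lower bound
    have h1 : ∀ i ∈ range k, Q ^ (n - k) < (Q ^ (n - i) - 1) / (Q ^ (k - i) - 1) := by
      intro i hi
      have hb := hbpos i hi
      rw [Finset.mem_range] at hi
      rw [lt_div_iff₀ hb]
      have hsplit : Q ^ (n - i) = Q ^ (n - k) * Q ^ (k - i) := by
        rw [← pow_add]; congr 1; omega
      rw [hsplit]; nlinarith
    calc Q ^ (k * (n - k)) = ∏ _i ∈ range k, Q ^ (n - k) := by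
          rw [Finset.prod_const, Finset.card_range, ← pow_mul, Nat.mul_comm]
      _ < gaussQ q n k := by
          apply Finset.prod_lt_prod_of_nonempty (fun i _ => by positivity) h1 hne
  · -- upper bound
    have h2 : ∀ i ∈ range k, (Q ^ (n - i) - 1) / (Q ^ (k - i) - 1) <
        Q ^ (n - k) * (Q ^ (k - i) / (Q ^ (k - i) - 1)) := by
      intro i hi
      have hb := hbpos i hi
      rw [Finset.mem_range] at hi
      have hsplit : Q ^ (n - i) = Q ^ (n - k) * Q ^ (k - i) := by
        rw [← pow_add]; congr 1; omega
      rw [mul_div_assoc', div_lt_div_iff_of_pos_right hb, ← hsplit]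
      linarith
    have hpos : ∀ i ∈ range k, (0:ℚ) < (Q ^ (n - i) - 1) / (Q ^ (k - i) - 1) := by
      intro i hi
      have hb := hbpos i hi
      rw [Finset.mem_range] at hi
      have : (1:ℚ) < Q ^ (n - i) := one_lt_pow₀ hQ1 (by omega)
      apply div_pos (by linarith) hb
    have step1 : gaussQ q n k < ∏ i ∈ range k, Q ^ (n - k) * (Q ^ (k - i) / (Q ^ (k - i) - 1)) :=
      Finset.prod_lt_prod_of_nonempty hpos h2 hne
    have reindex : ∏ i ∈ range k, Q ^ (k - i) / (Q ^ (k - i) - 1)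
        = ∏ j ∈ range k, Q ^ (j+1) / (Q ^ (j+1) - 1) := by
      rw [← Finset.prod_range_reflect (fun j => Q ^ (j+1) / (Q ^ (j+1) - 1)) k]
      apply Finset.prod_congr rfl
      intro i hi
      rw [Finset.mem_range] at hi
      congr 2 <;> · congr 1; omega
    have hT : ∏ i ∈ range k, Q ^ (k - i) / (Q ^ (k - i) - 1) < 4 := by
      rw [reindex]
      have := aux_prod Q hQ k (by omega)
      have hpk : (0:ℚ) < (Q⁻¹) ^ k := by positivity
      linarith
    have split : ∏ i ∈ range k, Q ^ (n - k) * (Q ^ (k - i) / (Q ^ (k - i) - 1))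
        = Q ^ (k * (n - k)) * ∏ i ∈ range k, Q ^ (k - i) / (Q ^ (k - i) - 1) := by
      rw [Finset.prod_mul_distrib, Finset.prod_const, Finset.card_range, ← pow_mul, Nat.mul_comm]
    have hpk2 : (0:ℚ) < Q ^ (k * (n - k)) := by positivity
    calc gaussQ q n k < Q ^ (k * (n - k)) * ∏ i ∈ range k, Q ^ (k - i) / (Q ^ (k - i) - 1) := by
          rw [← split]; exact step1
      _ < Q ^ (k * (n - k)) * 4 := by
          apply mul_lt_mul_of_pos_left hT hpk2
      _ = 4 * Q ^ (k * (n - k)) := by ring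
end

section
/- Let F = (F_{n-k},...,F_1) be a Ferrers diagram of size m embedded in a k×(n-k) box, and set F_0 = k. The number of Ferrers diagrams F' of size m embedded in the same box with F' < F (where F' < F iff F'_i > F_i at the least index i with F'_i ≠ F_i) equals ∑_{j=1}^{n-k} ∑_{a=F_j+1}^{F_{j-1}} p(a, n-k-j, m - ∑_{i=1}^{j-1}F_i - a). -/
open Finset

/-- `partCount k η m` is the number of partitions of `m` into at most `k` parts,
each part of size at most `η`. -/
noncomputable def partCount (k η m : ℕ) : ℕ :=
  Nat.card {P : Nat.Partition m // Multiset.card P.parts ≤ k ∧ ∀ a ∈ P.parts, a ≤ η}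

/-- `partCountZ` extends `partCount` to integer `m`, vanishing for `m < 0`. -/
noncomputable def partCountZ (k η : ℕ) (m : ℤ) : ℕ :=
  if m < 0 then 0 else partCount k η m.toNat

/-- A Ferrers diagram embedded in a `k × (n-k)` box, given by its column heights
numbered from the right starting at index `0`. -/
def IsFerrersInBox (n k : ℕ) (c : ℕ → ℕ) : Prop :=
  Antitone c ∧ c 0 ≤ k ∧ ∀ t, n - k ≤ t → c t = 0

/-- The order on Ferrers diagrams: `c < d` iff at the least column index where the
heights differ, `c` has more dots than `d`. -/
def FerrersLtF (c d : ℕ → ℕ) : Prop :=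
  ∃ t : ℕ, (∀ s < t, c s = d s) ∧ d t < c t

/-! ### Auxiliary definitions and lemmas -/

/-- Antitone functions supported on `range η`, bounded by `k`, with total sum `s`. -/
def BoxFun (η k s : ℕ) : Type :=
  {c : ℕ → ℕ // Antitone c ∧ c 0 ≤ k ∧ (∀ t, η ≤ t → c t = 0) ∧ ∑ t ∈ Finset.range η, c t = s}

lemma sum_ite_lt_eq (a η : ℕ) (h : a ≤ η) :
    (∑ i ∈ Finset.range η, if i < a then 1 else 0) = a := by
  rw [← Finset.card_filter]
  have : (Finset.range η).filter (fun i => i < a) = Finset.range a := by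
    ext x; simp only [Finset.mem_filter, Finset.mem_range]; omega
  rw [this, Finset.card_range]

lemma filter_card_lt_iff {c : ℕ → ℕ} (hc : Antitone c) {η : ℕ}
    (hv : ∀ t, η ≤ t → c t = 0) (i j : ℕ) :
    i < ((Finset.range η).filter (fun i' => j < c i')).card ↔ j < c i := by
  constructor
  · intro h
    by_contra hji
    push_neg at hji
    have hsubset : (Finset.range η).filter (fun i' => j < c i') ⊆ Finset.range i := by
      intro x hx
      simp only [Finset.mem_filter, Finset.mem_range] at hx ⊢
      by_contra hxi
      push_neg at hxi
      exact absurd (lt_of_lt_of_le hx.2 (le_trans (hc hxi) hji)) (lt_irrefl _)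
    have := Finset.card_le_card hsubset
    rw [Finset.card_range] at this
    omega
  · intro h
    have hiη : i < η := by
      by_contra hi
      push_neg at hi
      rw [hv i hi] at h
      omega
    have hsubset : Finset.range (i + 1) ⊆ (Finset.range η).filter (fun i' => j < c i') := by
      intro x hx
      simp only [Finset.mem_range] at hx
      simp only [Finset.mem_filter, Finset.mem_range]
      exact ⟨by omega, lt_of_lt_of_le h (hc (by omega))⟩
    have := Finset.card_le_card hsubset
    rw [Finset.card_range] at this
    omega

lemma sum_countP_lt (η : ℕ) (s : Multiset ℕ) (hle : ∀ p ∈ s, p ≤ η) :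
    (∑ i ∈ Finset.range η, Multiset.countP (fun p => i < p) s) = s.sum := by
  induction s using Multiset.induction_on with
  | empty => simp
  | cons a t ih =>
    have ha : a ≤ η := hle a (Multiset.mem_cons_self _ _)
    have ht : ∀ p ∈ t, p ≤ η := fun p hp => hle p (Multiset.mem_cons_of_mem hp)
    simp only [Multiset.countP_cons, Multiset.sum_cons, Finset.sum_add_distrib, ih ht,
      sum_ite_lt_eq a η ha]
    omega

lemma countP_lt_succ (s : Multiset ℕ) (a : ℕ) :
    Multiset.countP (fun p => a < p) s
      = Multiset.count (a + 1) s + Multiset.countP (fun p => a + 1 < p) s := by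
  induction s using Multiset.induction_on with
  | empty => simp
  | cons b t ih =>
    rw [Multiset.countP_cons, Multiset.countP_cons, Multiset.count_cons, ih]
    split_ifs <;> omega

lemma multiset_eq_of_countP_lt (s t : Multiset ℕ) (hs : ∀ p ∈ s, 0 < p) (ht : ∀ p ∈ t, 0 < p)
    (h : ∀ i, Multiset.countP (fun p => i < p) s = Multiset.countP (fun p => i < p) t) :
    s = t := by
  ext p
  cases p with
  | zero =>
    rw [Multiset.count_eq_zero_of_notMem, Multiset.count_eq_zero_of_notMem]
    · intro hmem; exact absurd (ht 0 hmem) (lt_irrefl 0)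
    · intro hmem; exact absurd (hs 0 hmem) (lt_irrefl 0)
  | succ p =>
    have h1 := countP_lt_succ s p
    have h2 := countP_lt_succ t p
    have := h p
    have := h (p + 1)
    omega

lemma sum_filter_pos (u : Multiset ℕ) :
    (Multiset.filter (fun p => 0 < p) u).sum = u.sum := by
  conv_rhs => rw [← Multiset.filter_add_not (fun p => 0 < p) u]
  rw [Multiset.sum_add]
  have : (Multiset.filter (fun a => ¬0 < a) u).sum = 0 :=
    Multiset.sum_eq_zero (fun x hx => by
      have := (Multiset.mem_filter.mp hx).2; omega)
  omega

lemma boxfun_le_top {c : ℕ → ℕ} (hc : Antitone c) {k : ℕ} (h0 : c 0 ≤ k) (i : ℕ) : c i ≤ k :=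
  le_trans (hc (Nat.zero_le i)) h0

/-- The conjugate of a box function, as a multiset of (positive) parts. -/
noncomputable def psiParts (η k : ℕ) (c : ℕ → ℕ) : Multiset ℕ :=
  Multiset.filter (fun p => 0 < p)
    ((Multiset.range k).map (fun j => ((Finset.range η).filter (fun i => j < c i)).card))

lemma countP_psiParts {η k s : ℕ} (c : BoxFun η k s) (i : ℕ) :
    Multiset.countP (fun p => i < p) (psiParts η k c.1) = c.1 i := by
  obtain ⟨c, hc, h0, hv, hsum⟩ := c
  simp only [psiParts]
  rw [Multiset.countP_filter]
  have heq : Multiset.countP (fun a => i < a ∧ 0 < a)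
      ((Multiset.range k).map (fun j => ((Finset.range η).filter (fun i' => j < c i')).card))
      = Multiset.countP (fun a => i < a)
      ((Multiset.range k).map (fun j => ((Finset.range η).filter (fun i' => j < c i')).card)) := by
    apply Multiset.countP_congr rfl
    intro x _
    exact propext ⟨fun h => h.1, fun h => ⟨h, by omega⟩⟩
  rw [heq, Multiset.countP_map]
  have : Multiset.filter (fun j => i < ((Finset.range η).filter (fun i' => j < c i')).card)
      (Multiset.range k) = Multiset.filter (fun j => j < c i) (Multiset.range k) := by
    apply Multiset.filter_congr
    intro j _
    exact filter_card_lt_iff hc hv i j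
  rw [this, ← Finset.range_val, ← Finset.filter_val]
  have : (Finset.range k).filter (fun j => j < c i) = Finset.range (c i) := by
    ext x
    simp only [Finset.mem_filter, Finset.mem_range]
    have := boxfun_le_top hc h0 i
    omega
  rw [this]
  simp

noncomputable def partBoxEquiv (k η m : ℕ) :
    {P : Nat.Partition m // Multiset.card P.parts ≤ k ∧ ∀ a ∈ P.parts, a ≤ η}
      ≃ BoxFun η k m where
  toFun P := ⟨fun i => Multiset.countP (fun p => i < p) P.1.parts, by
      intro i i' h
      dsimp only
      rw [Multiset.countP_eq_card_filter, Multiset.countP_eq_card_filter]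
      exact Multiset.card_le_card
        (Multiset.monotone_filter_right _ (fun b hb => lt_of_le_of_lt h hb)), by
      exact le_trans (Multiset.countP_le_card _ _) P.2.1, by
      intro t ht
      exact Multiset.countP_eq_zero.mpr (fun p hp => by have := P.2.2 p hp; omega), by
      rw [sum_countP_lt η P.1.parts P.2.2]
      exact P.1.parts_sum⟩
  invFun c := ⟨⟨psiParts η k c.1, by
      intro i hi
      exact (Multiset.mem_filter.mp hi).2, by
      obtain ⟨c, hc, h0, hv, hsum⟩ := c
      simp only [psiParts]
      rw [sum_filter_pos, ← Finset.range_val, ← Finset.sum_eq_multiset_sum]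
      calc (∑ j ∈ Finset.range k, ((Finset.range η).filter (fun i => j < c i)).card)
          = ∑ j ∈ Finset.range k, ∑ i ∈ Finset.range η, if j < c i then 1 else 0 := by
            simp only [Finset.card_filter]
        _ = ∑ i ∈ Finset.range η, ∑ j ∈ Finset.range k, if j < c i then 1 else 0 :=
            Finset.sum_comm
        _ = ∑ i ∈ Finset.range η, c i :=
            Finset.sum_congr rfl (fun i _ => sum_ite_lt_eq (c i) k (boxfun_le_top hc h0 i))
        _ = m := hsum⟩, by
      dsimp only [psiParts]
      refine le_trans (Multiset.card_le_card (Multiset.filter_le _ _)) ?_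
      rw [Multiset.card_map, Multiset.card_range], by
      intro a ha
      dsimp only [psiParts] at ha
      have := Multiset.mem_of_mem_filter ha
      obtain ⟨j, _, hj⟩ := Multiset.mem_map.mp this
      rw [← hj]
      exact le_trans (Finset.card_filter_le _ _) (le_of_eq (Finset.card_range η))⟩
  left_inv P := by
    apply Subtype.ext
    apply Nat.Partition.ext
    show psiParts η k (fun i => Multiset.countP (fun p => i < p) P.1.parts) = P.1.parts
    apply multiset_eq_of_countP_lt
    · intro p hp
      simp only [psiParts] at hp
      exact (Multiset.mem_filter.mp hp).2
    · intro p hp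
      exact P.1.parts_pos hp
    · intro i
      rw [countP_psiParts ⟨fun i => Multiset.countP (fun p => i < p) P.1.parts, by
        intro a b h
        dsimp only
        rw [Multiset.countP_eq_card_filter, Multiset.countP_eq_card_filter]
        exact Multiset.card_le_card
          (Multiset.monotone_filter_right _ (fun x hx => lt_of_le_of_lt h hx)), by
        exact le_trans (Multiset.countP_le_card _ _) P.2.1, by
        intro t ht
        exact Multiset.countP_eq_zero.mpr (fun p hp => by have := P.2.2 p hp; omega),
        (sum_countP_lt η P.1.parts P.2.2).trans P.1.parts_sum⟩ i]
  right_inv c := Subtype.ext (funext (fun i => countP_psiParts c i))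

lemma partCount_eq_card_boxFun (k η m : ℕ) :
    partCount k η m = Nat.card (BoxFun η k m) :=
  Nat.card_congr (partBoxEquiv k η m)

lemma finite_boxLike {η k : ℕ} {P : (ℕ → ℕ) → Prop}
    (h : ∀ c, P c → Antitone c ∧ c 0 ≤ k ∧ ∀ t, η ≤ t → c t = 0) :
    Finite {c : ℕ → ℕ // P c} := by
  apply Finite.of_injective (β := Fin η → Fin (k + 1))
    (fun x i => ⟨x.1 i.1, Nat.lt_succ_of_le (boxfun_le_top (h x.1 x.2).1 (h x.1 x.2).2.1 i.1)⟩)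
  intro x y hxy
  apply Subtype.ext; funext t
  by_cases ht : t < η
  · have := congrFun hxy ⟨t, ht⟩
    exact congrArg Fin.val this
  · rw [(h x.1 x.2).2.2 t (le_of_not_gt ht), (h y.1 y.2).2.2 t (le_of_not_gt ht)]

instance (η k s : ℕ) : Finite (BoxFun η k s) :=
  finite_boxLike (fun _ hc => ⟨hc.1, hc.2.1, hc.2.2.1⟩)

/-- Diagrams in the box of size `m` agreeing with `F` before column `j` and with
height `a` in column `j`. -/
def TSet (n k m : ℕ) (F : ℕ → ℕ) (j a : ℕ) : Type :=
  {c : ℕ → ℕ // (IsFerrersInBox n k c ∧ (∑ t ∈ Finset.range (n - k), c t) = m)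
    ∧ (∀ s < j, c s = F s) ∧ c j = a}

instance (n k m : ℕ) (F : ℕ → ℕ) (j a : ℕ) : Finite (TSet n k m F j a) :=
  finite_boxLike (fun _ hc => ⟨hc.1.1.1, hc.1.1.2.1, hc.1.1.2.2⟩)

lemma sum_split (c : ℕ → ℕ) (L j : ℕ) (hj : j < L) :
    ∑ t ∈ Finset.range L, c t
      = (∑ t ∈ Finset.range j, c t) + c j + ∑ i ∈ Finset.range (L - 1 - j), c (j + 1 + i) := by
  have h := Finset.sum_range_add c (j + 1) (L - 1 - j)
  rw [Finset.sum_range_succ] at h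
  have hL : (j + 1) + (L - 1 - j) = L := by omega
  rw [hL] at h
  omega

def tailEquiv (n k m : ℕ) (F : ℕ → ℕ) (j a s' : ℕ)
    (hF : IsFerrersInBox n k F) (hj : j < n - k)
    (ha : a ≤ if j = 0 then k else F (j - 1))
    (hs' : (∑ i ∈ Finset.range j, F i) + a + s' = m) :
    TSet n k m F j a ≃ BoxFun (n - k - 1 - j) a s' where
  toFun x := ⟨fun i => x.1 (j + 1 + i), by
      refine ⟨?_, ?_, ?_, ?_⟩
      · intro i i' h
        exact x.2.1.1.1 (by omega)
      · show x.1 (j + 1 + 0) ≤ a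
        have h1 : x.1 (j + 1 + 0) ≤ x.1 j := x.2.1.1.1 (by omega)
        have h2 := x.2.2.2
        omega
      · intro t ht
        exact x.2.1.1.2.2 _ (by omega)
      · show (∑ i ∈ Finset.range (n - k - 1 - j), x.1 (j + 1 + i)) = s'
        have hsp := sum_split x.1 (n - k) j hj
        have h1 : ∑ t ∈ Finset.range j, x.1 t = ∑ t ∈ Finset.range j, F t :=
          Finset.sum_congr rfl (fun s hs => x.2.2.1 s (Finset.mem_range.mp hs))
        have h2 := x.2.1.2
        have h3 := x.2.2.2
        omega⟩
  invFun d := by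
    refine ⟨fun i => if i < j then F i else if i = j then a else d.1 (i - (j + 1)),
      ⟨⟨?_, ?_, ?_⟩, ?_⟩, ?_, ?_⟩
    · apply antitone_nat_of_succ_le
      intro i
      show (if i + 1 < j then F (i + 1) else if i + 1 = j then a else d.1 (i + 1 - (j + 1)))
        ≤ (if i < j then F i else if i = j then a else d.1 (i - (j + 1)))
      rcases lt_trichotomy (i + 1) j with h | h | h
      · rw [if_pos h, if_pos (by omega)]
        exact hF.1 (by omega)
      · rw [if_neg (by omega), if_pos h, if_pos (by omega)]
        have hne : ¬ j = 0 := by omega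
        rw [if_neg hne] at ha
        have h2 : F (j - 1) ≤ F i := hF.1 (by omega)
        omega
      · rw [if_neg (by omega), if_neg (by omega)]
        rcases lt_trichotomy i j with h' | h' | h'
        · omega
        · rw [if_neg (by omega), if_pos h']
          have h0 : d.1 (i + 1 - (j + 1)) ≤ d.1 0 := d.2.1 (by omega)
          have := d.2.2.1
          omega
        · rw [if_neg (by omega), if_neg (by omega)]
          exact d.2.1 (by omega)
    · show (if 0 < j then F 0 else if 0 = j then a else d.1 (0 - (j + 1))) ≤ k
      by_cases h0 : 0 < j
      · rw [if_pos h0]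
        exact hF.2.1
      · have hj0 : (0 : ℕ) = j := by omega
        rw [if_neg h0, if_pos hj0]
        rw [if_pos hj0.symm] at ha
        exact ha
    · intro t ht
      show (if t < j then F t else if t = j then a else d.1 (t - (j + 1))) = 0
      rw [if_neg (by omega), if_neg (by omega)]
      exact d.2.2.2.1 _ (by omega)
    · show (∑ t ∈ Finset.range (n - k),
          if t < j then F t else if t = j then a else d.1 (t - (j + 1))) = m
      have hsp := sum_split
        (fun i => if i < j then F i else if i = j then a else d.1 (i - (j + 1))) (n - k) j hj
      simp only at hsp
      have h1 : (∑ t ∈ Finset.range j,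
          if t < j then F t else if t = j then a else d.1 (t - (j + 1)))
          = ∑ t ∈ Finset.range j, F t :=
        Finset.sum_congr rfl (fun s hs => if_pos (Finset.mem_range.mp hs))
      have h2 : (∑ i ∈ Finset.range (n - k - 1 - j),
          if j + 1 + i < j then F (j + 1 + i) else if j + 1 + i = j then a
            else d.1 (j + 1 + i - (j + 1)))
          = ∑ i ∈ Finset.range (n - k - 1 - j), d.1 i := by
        refine Finset.sum_congr rfl (fun i _ => ?_)
        rw [if_neg (by omega), if_neg (by omega)]
        have harg : j + 1 + i - (j + 1) = i := by omega
        rw [harg]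
      have h3 := d.2.2.2.2
      rw [if_pos trivial, if_neg (lt_irrefl j)] at hsp
      rw [h1, h2] at hsp
      omega
    · intro s hs
      exact if_pos hs
    · show (if j < j then F j else if j = j then a else d.1 (j - (j + 1))) = a
      rw [if_neg (lt_irrefl j), if_pos rfl]
  left_inv x := by
    apply Subtype.ext
    funext i
    show (if i < j then F i else if i = j then a else x.1 (j + 1 + (i - (j + 1)))) = x.1 i
    rcases lt_trichotomy i j with h | h | h
    · rw [if_pos h]
      exact (x.2.2.1 i h).symm
    · rw [if_neg (by omega), if_pos h, h]
      exact x.2.2.2.symm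
    · rw [if_neg (by omega), if_neg (by omega)]
      have harg : j + 1 + (i - (j + 1)) = i := by omega
      rw [harg]
  right_inv d := by
    apply Subtype.ext
    funext i
    show (if j + 1 + i < j then F (j + 1 + i) else if j + 1 + i = j then a
      else d.1 (j + 1 + i - (j + 1))) = d.1 i
    rw [if_neg (by omega), if_neg (by omega)]
    have harg : j + 1 + i - (j + 1) = i := by omega
    rw [harg]

lemma card_TSet (n k m : ℕ) (F : ℕ → ℕ) (hF : IsFerrersInBox n k F) (j a : ℕ)
    (hj : j < n - k) (ha : a ≤ if j = 0 then k else F (j - 1)) :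
    Nat.card (TSet n k m F j a)
      = partCountZ a (n - k - 1 - j) ((m : ℤ) - (∑ i ∈ Finset.range j, (F i : ℤ)) - a) := by
  have hcast : (∑ i ∈ Finset.range j, (F i : ℤ)) = ((∑ i ∈ Finset.range j, F i : ℕ) : ℤ) :=
    (Nat.cast_sum _ _).symm
  by_cases hz : ((m : ℤ) - (∑ i ∈ Finset.range j, (F i : ℤ)) - a) < 0
  · rw [partCountZ, if_pos hz]
    have : IsEmpty (TSet n k m F j a) := by
      constructor
      intro x
      obtain ⟨c, ⟨hbox, hsum⟩, hpre, hja⟩ := x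
      have hsp := sum_split c (n - k) j hj
      have h1 : ∑ t ∈ Finset.range j, c t = ∑ t ∈ Finset.range j, F t :=
        Finset.sum_congr rfl (fun s hs => hpre s (Finset.mem_range.mp hs))
      rw [hcast] at hz
      omega
    exact Nat.card_of_isEmpty
  · push_neg at hz
    rw [hcast] at hz
    set s' := m - (∑ i ∈ Finset.range j, F i) - a with hs'def
    have hpcz : partCountZ a (n - k - 1 - j)
        ((m : ℤ) - (∑ i ∈ Finset.range j, (F i : ℤ)) - a)
        = partCount a (n - k - 1 - j) s' := by
      rw [partCountZ, if_neg (not_lt.mpr (hcast ▸ hz))]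
      congr 1
      rw [hcast]
      omega
    rw [hpcz, partCount_eq_card_boxFun]
    exact Nat.card_congr (tailEquiv n k m F j a s' hF hj ha (by omega))

/-- The set of diagrams being counted. -/
def LtSet (n k m : ℕ) (F : ℕ → ℕ) : Type :=
  { c : ℕ → ℕ // IsFerrersInBox n k c ∧
        (∑ t ∈ Finset.range (n - k), c t) = m ∧ FerrersLtF c F }

instance (n k m : ℕ) (F : ℕ → ℕ) : Finite (LtSet n k m F) :=
  finite_boxLike (fun _ hc => ⟨hc.1.1, hc.1.2.1, hc.1.2.2⟩)

lemma hexS {n k m : ℕ} {F : ℕ → ℕ} (x : LtSet n k m F) : ∃ t, x.1 t ≠ F t := by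
  obtain ⟨t, _, h⟩ := x.2.2.2
  exact ⟨t, by omega⟩

/-- The fiber map: least differing column and height there. -/
noncomputable def gS {n k m : ℕ} {F : ℕ → ℕ} (x : LtSet n k m F) : ℕ × ℕ :=
  (Nat.find (hexS x), x.1 (Nat.find (hexS x)))

lemma least_pre {n k m : ℕ} {F : ℕ → ℕ} (x : LtSet n k m F) :
    ∀ s < Nat.find (hexS x), x.1 s = F s :=
  fun s hs => not_not.mp (Nat.find_min (hexS x) hs)

lemma least_gt {n k m : ℕ} {F : ℕ → ℕ} (x : LtSet n k m F) :
    F (Nat.find (hexS x)) < x.1 (Nat.find (hexS x)) := by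
  obtain ⟨t₀, hpre, hgt⟩ := x.2.2.2
  have h1 : Nat.find (hexS x) ≤ t₀ := Nat.find_le (by omega)
  have h2 : ¬ Nat.find (hexS x) < t₀ := by
    intro hlt
    exact (Nat.find_spec (hexS x)) (hpre _ hlt)
  have : Nat.find (hexS x) = t₀ := by omega
  rw [this]
  exact hgt

lemma least_lt {n k m : ℕ} {F : ℕ → ℕ} (hF : IsFerrersInBox n k F) (x : LtSet n k m F) :
    Nat.find (hexS x) < n - k := by
  by_contra h
  push_neg at h
  have h1 := x.2.1.2.2 _ h
  have h2 := hF.2.2 _ h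
  have := least_gt x
  omega

lemma least_ub {n k m : ℕ} {F : ℕ → ℕ} (x : LtSet n k m F) :
    x.1 (Nat.find (hexS x)) ≤ if Nat.find (hexS x) = 0 then k else F (Nat.find (hexS x) - 1) := by
  by_cases h0 : Nat.find (hexS x) = 0
  · rw [if_pos h0, h0]
    exact x.2.1.2.1
  · rw [if_neg h0]
    have h1 : x.1 (Nat.find (hexS x)) ≤ x.1 (Nat.find (hexS x) - 1) := x.2.1.1 (by omega)
    rw [least_pre x (Nat.find (hexS x) - 1) (by omega)] at h1
    exact h1

noncomputable def fiberEquiv (n k m : ℕ) (F : ℕ → ℕ) (j a : ℕ) (hFja : F j < a) :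
    {x : LtSet n k m F // gS x = (j, a)} ≃ TSet n k m F j a where
  toFun y := ⟨y.1.1, ⟨y.1.2.1, y.1.2.2.1⟩, by
      have h1 : Nat.find (hexS y.1) = j := congrArg Prod.fst y.2
      intro s hs
      exact least_pre y.1 s (by omega), by
      have h1 : Nat.find (hexS y.1) = j := congrArg Prod.fst y.2
      have h2 : y.1.1 (Nat.find (hexS y.1)) = a := congrArg Prod.snd y.2
      rw [h1] at h2
      exact h2⟩
  invFun c := ⟨⟨c.1, c.2.1.1, c.2.1.2, ⟨j, c.2.2.1, by rw [c.2.2.2]; exact hFja⟩⟩, by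
      have hne : c.1 j ≠ F j := by rw [c.2.2.2]; omega
      have hfind : Nat.find (hexS (⟨c.1, c.2.1.1, c.2.1.2,
          ⟨j, c.2.2.1, by rw [c.2.2.2]; exact hFja⟩⟩ : LtSet n k m F)) = j :=
        Nat.find_eq_iff _ |>.mpr ⟨hne, fun s hs => not_not.mpr (c.2.2.1 s hs)⟩
      show (_, _) = (j, a)
      rw [hfind]
      exact Prod.ext rfl c.2.2.2⟩
  left_inv y := Subtype.ext (Subtype.ext rfl)
  right_inv c := Subtype.ext rfl

/-- The number of Ferrers diagrams of size `m` in a `k × (n-k)` box preceding a given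
diagram `F` equals `∑_{j=1}^{n-k} ∑_{a=F_j+1}^{F_{j-1}} p(a, n-k-j, m - ∑_{i=1}^{j-1}F_i - a)`,
where `F_0 = k`.  (Here the outer index `j` runs over `0,…,n-k-1`, corresponding to the
paper's columns `1,…,n-k`.) -/
theorem card_ferrers_lt (n k m : ℕ) (F : ℕ → ℕ)
    (hF : IsFerrersInBox n k F) (hm : (∑ t ∈ Finset.range (n - k), F t) = m) :
    Nat.card { c : ℕ → ℕ // IsFerrersInBox n k c ∧
        (∑ t ∈ Finset.range (n - k), c t) = m ∧ FerrersLtF c F }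
      = ∑ j ∈ Finset.range (n - k),
          ∑ a ∈ Finset.Icc (F j + 1) (if j = 0 then k else F (j - 1)),
            partCountZ a (n - k - 1 - j)
              ((m : ℤ) - (∑ i ∈ Finset.range j, (F i : ℤ)) - a) := by
  classical
  letI : Fintype (LtSet n k m F) := Fintype.ofFinite _
  have key : ∀ x : LtSet n k m F,
      gS x ∈ (Finset.range (n - k)) ×ˢ (Finset.range (k + 1)) := by
    intro x
    rw [Finset.mem_product]
    refine ⟨Finset.mem_range.mpr (least_lt hF x), Finset.mem_range.mpr ?_⟩
    exact Nat.lt_succ_of_le (boxfun_le_top x.2.1.1 x.2.1.2.1 _)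
  have step1 : Nat.card (LtSet n k m F)
      = ∑ p ∈ (Finset.range (n - k)) ×ˢ (Finset.range (k + 1)),
          ((Finset.univ : Finset (LtSet n k m F)).filter (fun x => gS x = p)).card := by
    rw [Nat.card_eq_fintype_card, ← Finset.card_univ]
    exact Finset.card_eq_sum_card_fiberwise (fun x _ => key x)
  have step2 : ∀ j a, ((Finset.univ : Finset (LtSet n k m F)).filter
        (fun x => gS x = (j, a))).card
      = Nat.card {x : LtSet n k m F // gS x = (j, a)} := by
    intro j a
    rw [Nat.card_eq_fintype_card, Fintype.card_subtype]
  show Nat.card (LtSet n k m F) = _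
  rw [step1, Finset.sum_product]
  refine Finset.sum_congr rfl (fun j hj => ?_)
  have hjlt : j < n - k := Finset.mem_range.mp hj
  have hprev : (if j = 0 then k else F (j - 1)) ≤ k := by
    split
    · exact le_refl k
    · exact boxfun_le_top hF.1 hF.2.1 _
  have hzero : ∀ a ∈ Finset.range (k + 1),
      a ∉ Finset.Icc (F j + 1) (if j = 0 then k else F (j - 1)) →
      ((Finset.univ : Finset (LtSet n k m F)).filter (fun x => gS x = (j, a))).card = 0 := by
    intro a _ ha
    rw [Finset.card_eq_zero, Finset.filter_eq_empty_iff]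
    intro x _
    intro hxe
    have h1 : Nat.find (hexS x) = j := congrArg Prod.fst hxe
    have h2 : x.1 (Nat.find (hexS x)) = a := congrArg Prod.snd hxe
    have h3 := least_gt x
    have h4 := least_ub x
    rw [h2, h1] at h3 h4
    exact ha (Finset.mem_Icc.mpr ⟨by omega, h4⟩)
  have hsub : Finset.Icc (F j + 1) (if j = 0 then k else F (j - 1)) ⊆ Finset.range (k + 1) := by
    intro a ha
    have := Finset.mem_Icc.mp ha
    exact Finset.mem_range.mpr (by omega)
  rw [← Finset.sum_subset hsub hzero]
  exact Finset.sum_congr rfl (fun a ha => by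
    have hmem := Finset.mem_Icc.mp ha
    rw [step2, Nat.card_congr (fiberEquiv n k m F j a (by omega))]
    exact card_TSet n k m F hF j a hjlt hmem.2)
end

section
/- Let S_F consist of the single full Ferrers diagram with k(n-k) dots embedded in a k×(n-k) box. Let X ∈ G_q(n,k) with F_X ∉ S_F, with RREF columns (X_n,...,X_1), and let ℓ (0 ≤ ℓ ≤ n-k-1) be the number of consecutive zeroes before the first one (from the right) in the identifying vector v(X). Then the number of subspaces of Type S_F lexicographically succeeding X in the extended-representation order equals ∑_{i=1}^{ℓ} (q^k - 1 - {X_i})·q^{k(n-k-i)}. -/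
open Finset
open scoped Classical

/-- The value `{X_c}` of column `c` of `N` read as a base-`q` integer (top entry most
significant), via the digit bijection `φ`. -/
noncomputable def colVal {Fq : Type} [Field Fq] [Fintype Fq] {k n : ℕ}
    (φ : Fq ≃ Fin (Fintype.card Fq)) (N : Matrix (Fin k) (Fin n) Fq) (c : Fin n) : ℕ :=
  ∑ i : Fin k, (φ (N i c) : ℕ) * (Fintype.card Fq) ^ (k - 1 - (i : ℕ))

/-- The value of column `c` of the extended representation. -/
noncomputable def extVal {Fq : Type} [Field Fq] [Fintype Fq] {k n : ℕ}
    (φ : Fq ≃ Fin (Fintype.card Fq)) (N : Matrix (Fin k) (Fin n) Fq)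
    (piv' : Fin k → Fin n) (c : Fin n) : ℕ :=
  (if ∃ i, piv' i = c then (Fintype.card Fq) ^ k else 0) + colVal φ N c

/-- The extended-representation lexicographic order: `(N,piv') < (M,piv)` iff at the
rightmost column where the extended representations differ, `(N,piv')` has the smaller
base-`q` column value. -/
def ExtLt {Fq : Type} [Field Fq] [Fintype Fq] {k n : ℕ}
    (φ : Fq ≃ Fin (Fintype.card Fq))
    (N : Matrix (Fin k) (Fin n) Fq) (piv' : Fin k → Fin n)
    (M : Matrix (Fin k) (Fin n) Fq) (piv : Fin k → Fin n) : Prop :=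
  ∃ c : Fin n, (∀ c' : Fin n, c < c' →
      (((∃ i, piv' i = c') ↔ (∃ i, piv i = c')) ∧ ∀ i, N i c' = M i c')) ∧
    extVal φ N piv' c < extVal φ M piv c

/-!
A subspace of Type `S_F` has RREF `[I_k | A]`, so it is determined by `A`, and all its pivots lie
left of the rightmost pivot of `X`, in column `n - 1 - ℓ`. Scanning extended representations from
the right, that column alone makes `X` the larger one, so `Y` succeeds `X` iff at the rightmost
column `c > n - 1 - ℓ` where they differ, `{Y_c} > {X_c}`. For fixed `c` the columns right of `c`
are forced, column `c` has `q^k - 1 - {X_c}` admissible values, and each of the `c - k` free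
columns left of it has `q^k`.
-/

section Digits

variable {α : Type*} [Fintype α] {k : ℕ}

noncomputable def baseVal (φ : α ≃ Fin (Fintype.card α)) (v : Fin k → α) : ℕ :=
  ∑ i : Fin k, (φ (v i) : ℕ) * Fintype.card α ^ (k - 1 - (i : ℕ))

-- `finFunctionFinEquiv` puts the least significant digit first, hence `Fin.revPerm`.
noncomputable def baseValEquiv (φ : α ≃ Fin (Fintype.card α)) :
    (Fin k → α) ≃ Fin (Fintype.card α ^ k) :=
  (Equiv.arrowCongr Fin.revPerm φ).trans finFunctionFinEquiv

theorem baseValEquiv_apply_val (φ : α ≃ Fin (Fintype.card α)) (v : Fin k → α) :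
    (baseValEquiv φ v : ℕ) = baseVal φ v := by
  rw [baseValEquiv, Equiv.trans_apply, finFunctionFinEquiv_apply, baseVal]
  refine Fintype.sum_bijective Fin.rev Fin.rev_bijective _ _ fun i => ?_
  have hrev : k - 1 - (k - (i + 1)) = i := by omega
  simp [Equiv.arrowCongr_apply, Fin.val_rev, hrev]

theorem baseVal_lt (φ : α ≃ Fin (Fintype.card α)) (v : Fin k → α) :
    baseVal φ v < Fintype.card α ^ k :=
  baseValEquiv_apply_val φ v ▸ (baseValEquiv φ v).isLt

theorem card_filter_lt_baseVal (φ : α ≃ Fin (Fintype.card α)) {t : ℕ}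
    (ht : t < Fintype.card α ^ k) :
    #(univ.filter fun v : Fin k → α => t < baseVal φ v) = Fintype.card α ^ k - 1 - t := by
  rw [card_equiv (baseValEquiv φ) (t := Ioi ⟨t, ht⟩) fun v => by
    simp [Fin.lt_def, baseValEquiv_apply_val], Fin.card_Ioi]

end Digits

section LeftIdentity

variable {R : Type*} [Semiring R] {k n : ℕ}

def HasLeftIdentity (N : Matrix (Fin k) (Fin n) R) : Prop :=
  ∀ i (j : Fin n), (j : ℕ) < k → N i j = if (j : ℕ) = i then 1 else 0

theorem HasLeftIdentity.apply_castLE {N : Matrix (Fin k) (Fin n) R} (hN : HasLeftIdentity N)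
    (hkn : k ≤ n) (i j : Fin k) : N i (Fin.castLE hkn j) = if j = i then 1 else 0 := by
  simp [hN i (Fin.castLE hkn j) j.isLt, Fin.val_inj]

theorem HasLeftIdentity.eq_sum_of_mem_span {N : Matrix (Fin k) (Fin n) R}
    (hN : HasLeftIdentity N) (hkn : k ≤ n) {v : Fin n → R}
    (hv : v ∈ Submodule.span R (Set.range fun i => N i)) :
    v = ∑ i, v (Fin.castLE hkn i) • N i := by
  obtain ⟨a, rfl⟩ := (Submodule.mem_span_range_iff_exists_fun R).1 hv
  congr! with i
  simp [Finset.sum_apply, hN.apply_castLE hkn]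

theorem HasLeftIdentity.eq_of_span_eq {N N' : Matrix (Fin k) (Fin n) R}
    (hN : HasLeftIdentity N) (hN' : HasLeftIdentity N') (hkn : k ≤ n)
    (hs : Submodule.span R (Set.range fun i => N i)
      = Submodule.span R (Set.range fun i => N' i)) : N = N' := by
  funext r
  have hr : N r ∈ Submodule.span R (Set.range fun i => N' i) :=
    hs ▸ Submodule.subset_span ⟨r, rfl⟩
  rw [hN'.eq_sum_of_mem_span hkn hr]
  simp only [hN.apply_castLE hkn, ite_smul, one_smul, zero_smul]
  exact Fintype.sum_ite_eq' r N'

end LeftIdentity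

section Echelon

variable {Fq : Type} [Field Fq] {k n : ℕ}

theorem isRREF_castLE_iff (hkn : k ≤ n) (N : Matrix (Fin k) (Fin n) Fq) :
    IsRREF N (Fin.castLE hkn) ↔ HasLeftIdentity N := by
  constructor
  · rintro ⟨-, hone, -, hzero⟩ i j hj
    have hpiv : j = Fin.castLE hkn ⟨j, hj⟩ := rfl
    by_cases hji : (j : ℕ) = i
    · rw [if_pos hji, hpiv, show (⟨j, hj⟩ : Fin k) = i from Fin.ext hji, hone]
    · rw [if_neg hji, hpiv, hzero _ _ fun h => hji (by simp [h])]
  · intro hN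
    refine ⟨Fin.strictMono_castLE hkn, fun i => ?_, fun i j hj => ?_, fun i i' hii' => ?_⟩
    · simp [hN.apply_castLE hkn]
    · exact (hN i j (hj.trans i.isLt)).trans (if_neg hj.ne)
    · simp [hN.apply_castLE hkn, hii'.symm]

end Echelon

theorem natCard_span_of_isRREF_castLE {Fq : Type} [Field Fq] {k n : ℕ} (hkn : k ≤ n)
    (P : Matrix (Fin k) (Fin n) Fq → (Fin k → Fin n) → Prop) :
    Nat.card {Y : Submodule Fq (Fin n → Fq) //
        ∃ (N : Matrix (Fin k) (Fin n) Fq) (piv' : Fin k → Fin n),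
          IsRREF N piv' ∧ (∀ i : Fin k, (piv' i : ℕ) = (i : ℕ)) ∧
          Submodule.span Fq (Set.range fun i => N i) = Y ∧ P N piv'}
      = Nat.card {N : Matrix (Fin k) (Fin n) Fq // HasLeftIdentity N ∧ P N (Fin.castLE hkn)} := by
  refine (Nat.card_congr (Equiv.ofBijective (fun N => ⟨_, N.1, Fin.castLE hkn,
    (isRREF_castLE_iff hkn _).2 N.2.1, fun _ => rfl, rfl, N.2.2⟩) ⟨?_, ?_⟩)).symm
  · intro ⟨N, hN, _⟩ ⟨N', hN', _⟩ hspan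
    exact Subtype.ext (hN.eq_of_span_eq hN' hkn (congrArg Subtype.val hspan))
  · rintro ⟨Y, N, piv', hrref, hpiv, rfl, hP⟩
    obtain rfl : piv' = Fin.castLE hkn := funext fun i => Fin.ext (hpiv i)
    exact ⟨⟨N, (isRREF_castLE_iff hkn N).1 hrref, hP⟩, rfl⟩

section ExtOrder

variable {Fq : Type} [Field Fq] [Fintype Fq] {k n : ℕ} (φ : Fq ≃ Fin (Fintype.card Fq))

theorem colVal_lt (N : Matrix (Fin k) (Fin n) Fq) (c : Fin n) :
    colVal φ N c < Fintype.card Fq ^ k :=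
  baseVal_lt φ _

theorem extVal_of_not_pivot {N : Matrix (Fin k) (Fin n) Fq} {piv : Fin k → Fin n} {c : Fin n}
    (h : ¬ ∃ i, piv i = c) : extVal φ N piv c = colVal φ N c := by
  simp [extVal, h]

theorem extLt_iff_of_pivot_lt {M N : Matrix (Fin k) (Fin n) Fq} {piv piv' : Fin k → Fin n}
    {p : Fin n} (hmax : ∀ i, piv i ≤ p) (hp : ∃ i, piv i = p) (hN : ∀ i, piv' i < p) :
    ExtLt φ M piv N piv' ↔ ∃ c, p < c ∧ (∀ c', c < c' → ∀ i, N i c' = M i c') ∧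
      colVal φ M c < colVal φ N c := by
  have hMc : ∀ c, p < c → ¬ ∃ i, piv i = c := fun c hc ⟨i, hi⟩ => (hmax i).not_gt (hi ▸ hc)
  have hNc : ∀ c, p ≤ c → ¬ ∃ i, piv' i = c := fun c hc ⟨i, hi⟩ => (hN i).not_ge (hi ▸ hc)
  constructor
  · rintro ⟨c, hagree, hlt⟩
    rcases lt_trichotomy c p with hcp | rfl | hpc
    · exact absurd ((hagree p hcp).1.1 hp) (hNc p le_rfl)
    · rw [extVal_of_not_pivot φ (hNc c le_rfl), extVal, if_pos hp] at hlt
      have := colVal_lt φ N c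
      omega
    · rw [extVal_of_not_pivot φ (hMc c hpc), extVal_of_not_pivot φ (hNc c hpc.le)] at hlt
      exact ⟨c, hpc, fun c' h i => ((hagree c' h).2 i).symm, hlt⟩
  · rintro ⟨c, hpc, hagree, hlt⟩
    refine ⟨c, fun c' h => ⟨iff_of_false (hMc c' (hpc.trans h)) (hNc c' (hpc.trans h).le),
      fun i => (hagree c' h i).symm⟩, ?_⟩
    rwa [extVal_of_not_pivot φ (hMc c hpc), extVal_of_not_pivot φ (hNc c hpc.le)]

end ExtOrder

theorem prod_range_ite_block {M : Type*} [CommMonoid M] {k c n : ℕ} (hkc : k ≤ c) (hcn : c < n)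
    (a b : M) :
    ∏ j ∈ range n, (if j < k then 1 else if j < c then b else if j = c then a else 1)
      = a * b ^ (c - k) := by
  set f : ℕ → M := fun j => if j < k then 1 else if j < c then b else if j = c then a else 1
  have hleft : ∏ j ∈ range k, f j = 1 := prod_eq_one fun j hj => if_pos (mem_range.1 hj)
  have hmid : ∏ j ∈ Ico k c, f j = b ^ (c - k) := by
    rw [prod_congr rfl fun j hj => ?_, prod_const, Nat.card_Ico]
    obtain ⟨hkj, hjc⟩ := mem_Ico.1 hj
    simp [f, hjc, hkj.not_gt]
  have hright : ∏ j ∈ Ico (c + 1) n, f j = 1 := prod_eq_one fun j hj => by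
    have hcj := (mem_Ico.1 hj).1
    simp only [f]
    rw [if_neg (by omega), if_neg (by omega), if_neg (by omega)]
  have hc : f c = a := by simp [f, hkc.not_gt]
  rw [← prod_range_mul_prod_Ico f hcn, prod_range_succ, ← prod_range_mul_prod_Ico f hkc,
    hleft, hmid, hright, hc, one_mul, mul_one, mul_comm]

theorem sum_Ioi_eq_sum_Icc {M : Type*} [AddCommMonoid M] {n ℓ : ℕ} (hℓ : ℓ < n)
    (f : Fin n → M) :
    ∑ c ∈ Ioi (⟨n - 1 - ℓ, by omega⟩ : Fin n), f c
      = ∑ i ∈ Icc 1 ℓ, if h : n - i < n then f ⟨n - i, h⟩ else 0 := by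
  refine sum_bij' (fun c _ => n - c) (fun i hi => ⟨n - i, by grind⟩) ?_ ?_ ?_ ?_ ?_
  · intro c hc
    have := c.isLt
    simp only [mem_Ioi, Fin.lt_def] at hc
    simp only [mem_Icc]
    omega
  · intro i hi
    simp only [mem_Icc] at hi
    simp only [mem_Ioi, Fin.lt_def]
    omega
  · intro c _
    ext
    simp only [Nat.sub_sub_self c.isLt.le]
  · intro i hi
    simp only [mem_Icc] at hi
    simp only
    omega
  · intro c _
    simp [Nat.sub_sub_self c.isLt.le]

section Counting

variable {Fq : Type} [Field Fq] [Fintype Fq] {k n : ℕ} (φ : Fq ≃ Fin (Fintype.card Fq))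
  (M : Matrix (Fin k) (Fin n) Fq)

noncomputable def firstExceedingAt (c : Fin n) : Finset (Matrix (Fin k) (Fin n) Fq) :=
  univ.filter fun N => HasLeftIdentity N ∧ (∀ c', c < c' → ∀ i, N i c' = M i c') ∧
    colVal φ M c < colVal φ N c

noncomputable def columnChoices (c j : Fin n) : Finset (Fin k → Fq) :=
  if (j : ℕ) < k then {fun i : Fin k => if (j : ℕ) = i then 1 else 0}
  else if (j : ℕ) < c then univ
  else if (j : ℕ) = c then univ.filter fun v => colVal φ M c < baseVal φ v
  else {fun i => M i j}

theorem card_columnChoices (c j : Fin n) :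
    #(columnChoices φ M c j) =
      if (j : ℕ) < k then 1
      else if (j : ℕ) < c then Fintype.card Fq ^ k
      else if (j : ℕ) = c then Fintype.card Fq ^ k - 1 - colVal φ M c
      else 1 := by
  unfold columnChoices
  split_ifs <;> simp [card_filter_lt_baseVal φ (colVal_lt φ M c)]

theorem mem_firstExceedingAt_iff {c : Fin n} (hkc : k ≤ c) (N : Matrix (Fin k) (Fin n) Fq) :
    N ∈ firstExceedingAt φ M c ↔ ∀ j, (fun i => N i j) ∈ columnChoices φ M c j := by
  simp only [firstExceedingAt, mem_filter, mem_univ, true_and]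
  constructor
  · rintro ⟨hN, hagree, hlt⟩ j
    unfold columnChoices
    split_ifs with hjk hjc hjc'
    · exact mem_singleton.2 (funext fun i => hN i j hjk)
    · exact mem_univ _
    · obtain rfl : j = c := Fin.ext hjc'
      exact mem_filter.2 ⟨mem_univ _, hlt⟩
    · exact mem_singleton.2 (funext (hagree j (Fin.lt_def.2 (by omega))))
  · intro h
    refine ⟨fun i j hj => ?_, fun c' hc' i => ?_, ?_⟩
    · have hcol := h j
      rw [columnChoices, if_pos hj, mem_singleton] at hcol
      exact congrFun hcol i
    · have hcc' := Fin.lt_def.1 hc'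
      have hcol := h c'
      rw [columnChoices, if_neg (by omega), if_neg (by omega), if_neg (by omega),
        mem_singleton] at hcol
      exact congrFun hcol i
    · have hc := h c
      rw [columnChoices, if_neg (by omega), if_neg (lt_irrefl _), if_pos rfl, mem_filter] at hc
      exact hc.2

theorem card_firstExceedingAt {c : Fin n} (hkc : k ≤ c) :
    #(firstExceedingAt φ M c)
      = (Fintype.card Fq ^ k - 1 - colVal φ M c) * Fintype.card Fq ^ (k * (c - k)) := by
  have hcols : #(firstExceedingAt φ M c) = #(Fintype.piFinset (columnChoices φ M c)) :=
    card_equiv (Equiv.piComm fun _ _ => Fq) fun N => by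
      rw [mem_firstExceedingAt_iff φ M hkc, Fintype.mem_piFinset]
      rfl
  rw [hcols, Fintype.card_piFinset]
  simp_rw [card_columnChoices]
  rw [Fin.prod_univ_eq_prod_range (fun j => if j < k then 1 else if j < c then _ else
    if j = c then _ else 1) n, prod_range_ite_block hkc c.isLt, pow_mul]

theorem pairwiseDisjoint_firstExceedingAt (s : Set (Fin n)) :
    s.PairwiseDisjoint (firstExceedingAt φ M) := by
  intro c _ d _ hcd
  refine disjoint_left.2 fun N hNc hNd => ?_
  simp only [firstExceedingAt, mem_filter, mem_univ, true_and] at hNc hNd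
  rcases hcd.lt_or_gt with h | h
  · exact (hNd.2.2.trans_eq (by simp [colVal, hNc.2.1 d h])).false
  · exact (hNc.2.2.trans_eq (by simp [colVal, hNd.2.1 c h])).false

end Counting

/-- Type `S_F` means pivots `piv' i = i`; paper column `i` is Lean column `n - i`, so the
rightmost pivot of `X` sits in Lean column `n - 1 - ℓ`. -/
theorem card_type_SF_succeeding_general (Fq : Type) [Field Fq] [Fintype Fq]
    (n k ℓ : ℕ) (hkn : k < n) (hℓ : ℓ ≤ n - k - 1)
    (φ : Fq ≃ Fin (Fintype.card Fq))
    (M : Matrix (Fin k) (Fin n) Fq) (piv : Fin k → Fin n)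
    (hmax : ∀ i : Fin k, (piv i : ℕ) ≤ n - 1 - ℓ)
    (hattained : ∃ i : Fin k, (piv i : ℕ) = n - 1 - ℓ) :
    Nat.card {Y : Submodule Fq (Fin n → Fq) //
        ∃ (N : Matrix (Fin k) (Fin n) Fq) (piv' : Fin k → Fin n),
          IsRREF N piv' ∧ (∀ i : Fin k, (piv' i : ℕ) = (i : ℕ)) ∧
          Submodule.span Fq (Set.range fun i => N i) = Y ∧
          ExtLt φ M piv N piv' }
      = ∑ i ∈ Finset.Icc 1 ℓ,
          ((Fintype.card Fq) ^ k - 1 -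
              (if h : n - i < n then colVal φ M ⟨n - i, h⟩ else 0))
            * (Fintype.card Fq) ^ (k * (n - k - i)) := by
  have hℓn : ℓ < n := by omega
  have hkp : k ≤ n - 1 - ℓ := by omega
  set p : Fin n := ⟨n - 1 - ℓ, by omega⟩
  have hsucc : univ.filter (fun N => HasLeftIdentity N ∧ ExtLt φ M piv N (Fin.castLE hkn.le))
      = (Ioi p).biUnion (firstExceedingAt φ M) := by
    ext N
    have hstd : ∀ i : Fin k, Fin.castLE hkn.le i < p := fun i => i.isLt.trans_le hkp
    simp only [mem_filter, mem_univ, true_and, mem_biUnion, mem_Ioi, firstExceedingAt,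
      extLt_iff_of_pivot_lt φ hmax (hattained.imp fun _ => Fin.ext) hstd]
    aesop
  rw [natCard_span_of_isRREF_castLE hkn.le, Nat.card_eq_fintype_card, Fintype.card_subtype, hsucc,
    card_biUnion (pairwiseDisjoint_firstExceedingAt φ M _),
    sum_congr rfl fun c hc => card_firstExceedingAt φ M (hkp.trans (mem_Ioi.1 hc).le),
    sum_Ioi_eq_sum_Icc hℓn]
  refine sum_congr rfl fun i hi => ?_
  have hin : n - i < n := by grind
  simp [hin, Nat.sub_right_comm n k i]

/-- Let `S_F` consist of the single full Ferrers diagram; a subspace is of Type `S_F`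
iff its pivots are the first `k` columns (`piv' i = i`).  For `X ∈ G_q(n,k)` not of
Type `S_F`, with `ℓ` consecutive zeroes at the right end of its identifying vector
(rightmost pivot in Lean column `n - 1 - ℓ`), the number of subspaces of Type `S_F`
lexicographically succeeding `X` equals `∑_{i=1}^{ℓ} (q^k - 1 - {X_i}) q^{k(n-k-i)}`,
where paper column `i` is Lean column `n - i`. -/
theorem card_type_SF_succeeding (Fq : Type) [Field Fq] [Fintype Fq]
    (n k ℓ : ℕ) (hk0 : 0 < k) (hkn : k < n) (hℓ : ℓ ≤ n - k - 1)
    (φ : Fq ≃ Fin (Fintype.card Fq)) (hφ0 : (φ 0 : ℕ) = 0) (hφ1 : (φ 1 : ℕ) = 1)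
    (M : Matrix (Fin k) (Fin n) Fq) (piv : Fin k → Fin n) (hM : IsRREF M piv)
    (hnotfull : ¬ ∀ i : Fin k, (piv i : ℕ) = (i : ℕ))
    (hmax : ∀ i : Fin k, (piv i : ℕ) ≤ n - 1 - ℓ)
    (hattained : ∃ i : Fin k, (piv i : ℕ) = n - 1 - ℓ) :
    Nat.card {Y : Submodule Fq (Fin n → Fq) //
        ∃ (N : Matrix (Fin k) (Fin n) Fq) (piv' : Fin k → Fin n),
          IsRREF N piv' ∧ (∀ i : Fin k, (piv' i : ℕ) = (i : ℕ)) ∧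
          Submodule.span Fq (Set.range fun i => N i) = Y ∧
          ExtLt φ M piv N piv' }
      = ∑ i ∈ Finset.Icc 1 ℓ,
          ((Fintype.card Fq) ^ k - 1 -
              (if h : n - i < n then colVal φ M ⟨n - i, h⟩ else 0))
            * (Fintype.card Fq) ^ (k * (n - k - i)) :=
  card_type_SF_succeeding_general Fq n k ℓ hkn hℓ φ M piv hmax hattained
end
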